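/- arXiv:2309.04983 — 6 statements merged into one kernel-verified Lean document; each statement's English description precedes it below -/
import Mathlib

section
/- Let F and G be non-zero polynomials in ℝ[x₁, x₂] of total degrees m and n, respectively. Then the set of real solutions (x₁, x₂) ∈ ℝ² of the system F = G = 0 is either infinite or has at most m·n elements. -/
/-!
Write `F = c a` and `G = c b` with `a`, `b` coprime; the common zeros are the zeros of `c` together
with the common zeros of `a` and `b`.

If `a` and `b` have `N` common zeros, consider the polynomials `A a + B b` with
`deg A ≤ deg b + N`, `deg B ≤ deg a + N`. They lie in the space `V_d` of polynomials of degree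
`≤ d = deg a + deg b + N`; by coprimality they form a subspace of dimension at least
`dim V_{deg b + N} + dim V_{deg a + N} - dim V_N`, and they vanish at the `N` points, which impose
`N` independent conditions on `V_d` by interpolation. Since `dim V_k = (k + 2).choose 2`, this
gives `N ≤ deg a · deg b`.

A polynomial `c` with finitely many real zeros has at most `deg c ^ 2` of them: the complement of a
finite set in `ℝ²` is connected, so `c` does not change sign, every zero is a local extremum and
hence a common zero of `c` and `∂c/∂x`, which has smaller degree; conclude by induction on the
degree. In total there are at most `deg c ^ 2 + deg a · deg b ≤ m n` common zeros.
-/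

open MvPolynomial Module

theorem Submodule.finrank_add_finrank_map_le {K V W : Type*} [DivisionRing K] [AddCommGroup V]
    [Module K V] [AddCommGroup W] [Module K W] {p q : Submodule K V} [FiniteDimensional K q]
    (f : V →ₗ[K] W) (hpq : p ≤ q) (hp : p ≤ LinearMap.ker f) :
    finrank K p + finrank K (q.map f) ≤ finrank K q := by
  rw [← LinearMap.finrank_range_add_finrank_ker (f.domRestrict q), LinearMap.range_domRestrict,
    add_comm, ← (Submodule.comapSubtypeEquivOfLe hpq).finrank_eq]
  refine Nat.add_le_add_left (Submodule.finrank_mono ?_) _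
  rw [LinearMap.ker_domRestrict]
  exact Submodule.comap_mono hp

theorem Finsupp.natCard_setOf_sum_le {σ : Type*} [Fintype σ] (d : ℕ) :
    Nat.card {s : σ →₀ ℕ | (s.sum fun _ e => e) ≤ d} =
      (d + Fintype.card σ).choose (Fintype.card σ) := by
  classical
  have hset : {s : σ →₀ ℕ | (s.sum fun _ e => e) ≤ d} =
      ↑((Finset.range (d + 1)).biUnion fun j => (Finset.univ : Finset σ).finsuppAntidiag j) := by
    ext s
    simp [Finsupp.sum, ← Finsupp.degree_apply, Finsupp.degree_eq_sum]
  rw [hset, Nat.card_coe_set_eq, Set.ncard_coe_finset, Finset.card_biUnion]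
  · simp only [Finset.card_finsuppAntidiag_nat_eq_choose, Finset.card_univ]
    generalize Fintype.card σ = k
    cases k with
    | zero => simp [Finset.sum_range_succ']
    | succ k =>
      rw [← add_assoc, ← Nat.sum_range_add_choose]
      refine Finset.sum_congr rfl fun j _ => ?_
      rw [add_right_comm, Nat.add_sub_cancel, add_comm, Nat.choose_symm_add]
  · intro i _ j _ hij
    simp only [Function.onFun, Finset.disjoint_left, Finset.mem_finsuppAntidiag]
    rintro s ⟨rfl, -⟩ ⟨h, -⟩
    exact hij h

theorem Nat.choose_two_mixed_difference (m n N : ℕ) :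
    (m + n + N + 2).choose 2 + (N + 2).choose 2 =
      (n + N + 2).choose 2 + (m + N + 2).choose 2 + m * n := by
  have h (x : ℕ) : (x + 2).choose 2 * 2 = (x + 2) * (x + 1) := by
    simpa using (Nat.add_one_mul_choose_eq (x + 1) 1).symm
  nlinarith [h (m + n + N), h N, h (n + N), h (m + N)]

namespace MvPolynomial

variable {σ K : Type*}

def zeroSet [CommSemiring K] (D : MvPolynomial σ K) : Set (σ → K) := {x | eval x D = 0}

@[simp]
theorem mem_zeroSet [CommSemiring K] {D : MvPolynomial σ K} {x : σ → K} :
    x ∈ zeroSet D ↔ eval x D = 0 :=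
  Iff.rfl

theorem totalDegree_pderiv_lt {R : Type*} [CommSemiring R] {D : MvPolynomial σ R} {i : σ}
    (h : pderiv i D ≠ 0) : (pderiv i D).totalDegree < D.totalDegree := by
  obtain ⟨t, ht, hdeg⟩ := Finset.exists_mem_eq_sup _ (support_nonempty.2 h)
    fun s : σ →₀ ℕ => s.sum fun _ e => e
  have hcoeff : coeff (t + Finsupp.single i 1) D ≠ 0 := by
    have := mem_support_iff.1 ht
    rw [coeff_pderiv] at this
    exact left_ne_zero_of_mul this
  calc (pderiv i D).totalDegree = t.sum fun _ e => e := hdeg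
    _ < (t + Finsupp.single i 1).sum fun _ e => e := by
      rw [Finsupp.sum_add_index' (fun _ => rfl) fun _ _ _ => rfl]
      simp
    _ ≤ D.totalDegree := le_totalDegree (mem_support_iff.2 hcoeff)

section Field

variable [Field K]

theorem finrank_restrictTotalDegree [Fintype σ] (d : ℕ) :
    finrank K (restrictTotalDegree σ K d) = (d + Fintype.card σ).choose (Fintype.card σ) := by
  rw [restrictTotalDegree, finrank_eq_nat_card_basis (basisRestrictSupport K _),
    Finsupp.natCard_setOf_sum_le]

theorem exists_lagrangeBasis (S : Finset (σ → K)) {p : σ → K} (hp : p ∈ S) :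
    ∃ P : MvPolynomial σ K, P.totalDegree < S.card ∧ eval p P = 1 ∧
      ∀ q ∈ S, q ≠ p → eval q P = 0 := by
  classical
  have hsep : ∀ q ∈ S.erase p, ∃ L : MvPolynomial σ K,
      L.totalDegree ≤ 1 ∧ eval q L = 0 ∧ eval p L ≠ 0 := by
    intro q hq
    obtain ⟨i, hi⟩ := Function.ne_iff.1 (Finset.ne_of_mem_erase hq)
    refine ⟨X i - C (q i), (totalDegree_sub_C_le _ _).trans (totalDegree_X i).le, by simp, ?_⟩
    simpa [sub_eq_zero] using hi.symm
  choose! L hLdeg hLq hLp using hsep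
  set P := ∏ q ∈ S.erase p, L q
  have hPp : eval p P ≠ 0 := by
    simpa [P, map_prod, Finset.prod_ne_zero_iff] using hLp
  refine ⟨(eval p P)⁻¹ • P, ?_, by simp [smul_eval, hPp], fun q hq hqp => ?_⟩
  · calc ((eval p P)⁻¹ • P).totalDegree ≤ P.totalDegree := totalDegree_smul_le _ _
      _ ≤ ∑ q ∈ S.erase p, (L q).totalDegree := totalDegree_finsetProd _ _
      _ ≤ (S.erase p).card := by simpa using Finset.sum_le_sum hLdeg
      _ < S.card := Finset.card_erase_lt_of_mem hp
  · have hq' := Finset.mem_erase.2 ⟨hqp, hq⟩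
    have hPq : eval q P = 0 := by
      rw [map_prod]
      exact Finset.prod_eq_zero hq' (hLq q hq')
    simp [smul_eval, hPq]

noncomputable def evalOn (S : Finset (σ → K)) : MvPolynomial σ K →ₗ[K] (S → K) :=
  LinearMap.pi fun x => (aeval x.1).toLinearMap

@[simp]
theorem evalOn_apply (S : Finset (σ → K)) (P : MvPolynomial σ K) (x : S) :
    evalOn S P x = eval x.1 P := by
  simp [evalOn]

theorem map_evalOn_restrictTotalDegree {S : Finset (σ → K)} {d : ℕ} (hS : S.card ≤ d + 1) :
    (restrictTotalDegree σ K d).map (evalOn S) = ⊤ := by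
  refine eq_top_iff.2 fun v _ => ?_
  choose L hLdeg hLp hLq using fun p : S => exists_lagrangeBasis S p.2
  refine ⟨∑ p, v p • L p, Submodule.sum_mem _ fun p _ => Submodule.smul_mem _ _ ?_, ?_⟩
  · rw [mem_restrictTotalDegree]
    have := hLdeg p
    omega
  · ext q
    simp only [evalOn_apply, map_sum, smul_eval]
    rw [Finset.sum_eq_single q (fun p _ hpq => by
        rw [hLq p q q.2 (Subtype.coe_ne_coe.2 hpq.symm), mul_zero]) (by simp),
      hLp, mul_one]

theorem ncard_zeroSet_inter_le_of_isRelPrime {F G : MvPolynomial (Fin 2) K}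
    (hF : F ≠ 0) (hG : G ≠ 0) (hFG : IsRelPrime F G) (hfin : (zeroSet F ∩ zeroSet G).Finite) :
    (zeroSet F ∩ zeroSet G).ncard ≤ F.totalDegree * G.totalDegree := by
  set S := hfin.toFinset
  set m := F.totalDegree
  set n := G.totalDegree
  set N := S.card
  set V := restrictTotalDegree (Fin 2) K
  set U₁ := (V (n + N)).map (LinearMap.mulLeft K F)
  set U₂ := (V (m + N)).map (LinearMap.mulLeft K G)
  have hU₁ : finrank K U₁ = finrank K (V (n + N)) :=
    (Submodule.equivMapOfInjective _ (mul_right_injective₀ hF) _).finrank_eq.symm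
  have hU₂ : finrank K U₂ = finrank K (V (m + N)) :=
    (Submodule.equivMapOfInjective _ (mul_right_injective₀ hG) _).finrank_eq.symm
  have hinf : U₁ ⊓ U₂ ≤ (V N).map (LinearMap.mulLeft K (F * G)) := by
    rintro _ ⟨⟨A, hA, rfl⟩, ⟨B, -, hBA⟩⟩
    obtain ⟨C, rfl⟩ : G ∣ A := hFG.symm.dvd_of_dvd_mul_left ⟨B, by simpa [eq_comm] using hBA⟩
    refine ⟨C, ?_, by simp⟩
    rcases eq_or_ne C 0 with rfl | hC
    · exact zero_mem _
    · rw [SetLike.mem_coe, mem_restrictTotalDegree] at hA ⊢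
      rw [totalDegree_mul_of_isDomain hG hC] at hA
      omega
  have hsup : U₁ ⊔ U₂ ≤ V (m + n + N) := by
    refine sup_le ?_ ?_ <;> rintro _ ⟨A, hA, rfl⟩ <;>
      rw [SetLike.mem_coe, mem_restrictTotalDegree] at hA <;>
      refine (mem_restrictTotalDegree _ _ _).2 ((totalDegree_mul _ _).trans ?_) <;>
      simp only [m, n] at hA ⊢ <;> omega
  have hker : U₁ ⊔ U₂ ≤ LinearMap.ker (evalOn S) := by
    have hS (x : S) := hfin.mem_toFinset.1 x.2
    refine sup_le ?_ ?_ <;> rintro _ ⟨A, -, rfl⟩ <;> ext x <;>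
      simp [mem_zeroSet.1 (hS x).1, mem_zeroSet.1 (hS x).2]
  have hcount := Submodule.finrank_add_finrank_map_le (evalOn S) hsup hker
  rw [map_evalOn_restrictTotalDegree (by omega), finrank_top, finrank_fintype_fun_eq_card,
    Fintype.card_coe] at hcount
  have hsupinf := Submodule.finrank_sup_add_finrank_inf_eq U₁ U₂
  have hinfdim := (Submodule.finrank_mono hinf).trans (Submodule.finrank_map_le _ _)
  simp only [hU₁, hU₂, V, finrank_restrictTotalDegree, Fintype.card_fin] at hcount hsupinf hinfdim
  rw [Set.ncard_eq_toFinset_card _ hfin]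
  linarith [Nat.choose_two_mixed_difference m n N]

theorem ncard_zeroSet_inter_le_of_forall_dvd {F G : MvPolynomial (Fin 2) K}
    (hF : F ≠ 0) (hG : G ≠ 0) (hfin : (zeroSet F ∩ zeroSet G).Finite)
    (hdiv : ∀ c, c ∣ G → c ≠ 0 → (zeroSet c).Finite → (zeroSet c).ncard ≤ c.totalDegree ^ 2) :
    (zeroSet F ∩ zeroSet G).ncard ≤ F.totalDegree * G.totalDegree := by
  obtain ⟨a, b, c, hab, rfl, rfl⟩ := UniqueFactorizationMonoid.exists_reduced_factors F hF G
  have hc := left_ne_zero_of_mul hF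
  have ha := right_ne_zero_of_mul hF
  have hb := right_ne_zero_of_mul hG
  have hZ : zeroSet (c * a) ∩ zeroSet (c * b) = zeroSet c ∪ (zeroSet a ∩ zeroSet b) := by
    ext x
    simp only [Set.mem_inter_iff, Set.mem_union, mem_zeroSet, map_mul, mul_eq_zero]
    tauto
  rw [hZ] at hfin ⊢
  rw [totalDegree_mul_of_isDomain hc ha, totalDegree_mul_of_isDomain hc hb]
  calc _ ≤ (zeroSet c).ncard + (zeroSet a ∩ zeroSet b).ncard := Set.ncard_union_le _ _
    _ ≤ c.totalDegree ^ 2 + a.totalDegree * b.totalDegree :=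
      add_le_add (hdiv c (dvd_mul_right c b) hc (hfin.subset Set.subset_union_left))
        (ncard_zeroSet_inter_le_of_isRelPrime ha hb hab (hfin.subset Set.subset_union_right))
    _ ≤ _ := by nlinarith

end Field

section restrictLine

variable [CommSemiring K] [DecidableEq σ]

noncomputable def restrictLine (p : σ → K) (i : σ) (D : MvPolynomial σ K) : Polynomial K :=
  aeval (Function.update (fun j => Polynomial.C (p j)) i Polynomial.X) D

theorem eval_restrictLine (p : σ → K) (i : σ) (D : MvPolynomial σ K) (s : K) :
    (restrictLine p i D).eval s = eval (Function.update p i s) D := by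
  induction D using MvPolynomial.induction_on with
  | C a => simp [restrictLine]
  | add f g hf hg => simp_all [restrictLine]
  | mul_X f j hf =>
    simp only [restrictLine, map_mul, Polynomial.eval_mul, eval_X] at hf ⊢
    rw [hf]
    rcases eq_or_ne j i with rfl | hj <;> simp [*]

theorem derivative_restrictLine (p : σ → K) (i : σ) (D : MvPolynomial σ K) :
    Polynomial.derivative (restrictLine p i D) = restrictLine p i (pderiv i D) := by
  induction D using MvPolynomial.induction_on with
  | C a => simp [restrictLine]
  | add f g hf hg => simp_all [restrictLine]
  | mul_X f j hf =>
    simp only [restrictLine, map_mul, map_add, Polynomial.derivative_mul, pderiv_mul] at hf ⊢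
    rw [hf]
    rcases eq_or_ne j i with rfl | hj <;> simp [*]

end restrictLine

theorem zeroSet_infinite_of_pderiv_eq_zero [Field K] [CharZero K] [DecidableEq σ]
    {D : MvPolynomial σ K} {i : σ} (hD : pderiv i D = 0) {p : σ → K} (hp : p ∈ zeroSet D) :
    (zeroSet D).Infinite := by
  have hconst := Polynomial.eq_C_of_derivative_eq_zero (p := restrictLine p i D)
    (by rw [derivative_restrictLine, hD]; simp [restrictLine])
  refine Set.infinite_of_injective_forall_mem (Function.update_injective p i) fun s => ?_
  have hcoeff := eval_restrictLine p i D (p i)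
  rw [Function.update_eq_self, hconst, Polynomial.eval_C] at hcoeff
  rw [mem_zeroSet, ← eval_restrictLine, hconst, Polynomial.eval_C, hcoeff]
  exact hp

section Real

theorem eval_pderiv_eq_zero_of_nonneg {D : MvPolynomial σ ℝ} (hD : ∀ x, 0 ≤ eval x D)
    {p : σ → ℝ} (hp : p ∈ zeroSet D) (i : σ) : eval p (pderiv i D) = 0 := by
  classical
  have hmin : IsLocalMin (fun s => (restrictLine p i D).eval s) (p i) :=
    Filter.Eventually.of_forall fun s => by
      simp only [eval_restrictLine, Function.update_eq_self]
      exact hp.symm ▸ hD _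
  have := hmin.deriv_eq_zero
  rwa [Polynomial.deriv, derivative_restrictLine, eval_restrictLine,
    Function.update_eq_self] at this

theorem nonneg_or_nonpos_of_countable_zeroSet [Fintype σ] (hσ : 1 < Fintype.card σ)
    {D : MvPolynomial σ ℝ} (hZ : (zeroSet D).Countable) :
    (∀ x, 0 ≤ eval x D) ∨ (∀ x, eval x D ≤ 0) := by
  by_contra! h
  obtain ⟨⟨x, hx⟩, ⟨y, hy⟩⟩ := h
  have hconn : IsPreconnected (zeroSet D)ᶜ :=
    (hZ.isConnected_compl_of_one_lt_rank (by rw [rank_fun']; exact_mod_cast hσ)).isPreconnected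
  obtain ⟨z, hz, hz0⟩ := hconn.intermediate_value (f := fun x => eval x D) (a := x) (b := y)
    hx.ne (ne_of_gt hy) (continuous_eval D).continuousOn ⟨hx.le, hy.le⟩
  exact hz hz0

theorem eval_pderiv_eq_zero_of_countable_zeroSet [Fintype σ] (hσ : 1 < Fintype.card σ)
    {D : MvPolynomial σ ℝ} (hZ : (zeroSet D).Countable) {p : σ → ℝ} (hp : p ∈ zeroSet D)
    (i : σ) : eval p (pderiv i D) = 0 := by
  rcases nonneg_or_nonpos_of_countable_zeroSet hσ hZ with hD | hD
  · exact eval_pderiv_eq_zero_of_nonneg hD hp i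
  · simpa using eval_pderiv_eq_zero_of_nonneg (D := -D) (fun x => by simpa using hD x)
      (by simpa using hp) i

theorem ncard_zeroSet_le_totalDegree_sq {D : MvPolynomial (Fin 2) ℝ} (hD : D ≠ 0)
    (hfin : (zeroSet D).Finite) : (zeroSet D).ncard ≤ D.totalDegree ^ 2 := by
  induction hd : D.totalDegree using Nat.strong_induction_on generalizing D with
  | _ d ih =>
  by_cases h0 : pderiv 0 D = 0
  · rw [Set.not_nonempty_iff_eq_empty.1 fun ⟨p, hp⟩ =>
      zeroSet_infinite_of_pderiv_eq_zero h0 hp hfin]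
    simp
  have hcrit : zeroSet D = zeroSet D ∩ zeroSet (pderiv 0 D) := Set.left_eq_inter.2 fun p hp =>
    eval_pderiv_eq_zero_of_countable_zeroSet (by simp) hfin.countable hp 0
  have hlt : (pderiv 0 D).totalDegree < d := hd ▸ totalDegree_pderiv_lt h0
  rw [hcrit] at hfin ⊢
  calc _ ≤ D.totalDegree * (pderiv 0 D).totalDegree :=
        ncard_zeroSet_inter_le_of_forall_dvd hD h0 hfin fun c hc hc0 hcfin =>
          ih _ ((totalDegree_le_of_dvd_of_isDomain hc h0).trans_lt hlt) hc0 hcfin rfl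
    _ ≤ d ^ 2 := by
      rw [hd, sq]
      exact Nat.mul_le_mul_left d hlt.le

end Real

end MvPolynomial

theorem real_bezout_projective (F G : MvPolynomial (Fin 2) ℝ) (hF : F ≠ 0) (hG : G ≠ 0)
    (m n : ℕ) (hm : F.totalDegree = m) (hn : G.totalDegree = n) :
    {x : Fin 2 → ℝ | MvPolynomial.eval x F = 0 ∧ MvPolynomial.eval x G = 0}.Infinite ∨
    {x : Fin 2 → ℝ | MvPolynomial.eval x F = 0 ∧ MvPolynomial.eval x G = 0}.ncard ≤ m * n := by
  subst hm hn
  refine (zeroSet F ∩ zeroSet G).finite_or_infinite.symm.imp id fun hfin => ?_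
  exact ncard_zeroSet_inter_le_of_forall_dvd hF hG hfin fun c _ hc hcfin =>
    ncard_zeroSet_le_totalDegree_sq hc hcfin
end

section
/- Let F and G be non-zero polynomials in ℝ[x₁, x₂] with deg_{x₁} F = m₁, deg_{x₂} F = m₂, deg_{x₁} G = n₁, deg_{x₂} G = n₂. Then the set of real solutions (x₁, x₂) ∈ ℝ² of the system F = G = 0 is either infinite or has at most m₁·n₂ + m₂·n₁ elements. -/
/-!
Regard `F` and `G` as polynomials `P, Q` in the outer variable `x₁` with coefficients in
`ℝ[x₂]`. If `P` and `Q` share a factor `d` of positive `x₁`-degree, the zero set splits as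
`{d = 0} ∪ {P/d = Q/d = 0}`. At a point of `{d = 0}` where `∂d/∂x₁ ≠ 0`, `d` changes sign along the
line `x₂ = const`, hence by the intermediate value theorem on all nearby lines, and `{d = 0}` is
infinite; otherwise `{d = 0} = {d = ∂d/∂x₁ = 0}`. Both pieces have smaller `x₁`-degree, and the
bounds add up by induction.

If `P` and `Q` have no common factor, their resultant `R(x₂)` is a nonzero polynomial of degree at
most `m₁ n₂ + m₂ n₁`. Multiplying the Sylvester matrix by a Vandermonde matrix whose nodes include
the `k` common zeros on a line `x₂ = b` makes `k` of its rows vanish at `b`, so `(x₂ - b)ᵏ ∣ R`,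
and summing over the lines bounds the number of common zeros by `deg R`.
-/

open Polynomial Polynomial.Bivariate Matrix Finset Filter Topology

theorem Set.infinite_or_ncard_union_le {α : Type*} {s t : Set α} {a b : ℕ}
    (hs : s.Infinite ∨ s.ncard ≤ a) (ht : t.Infinite ∨ t.ncard ≤ b) :
    (s ∪ t).Infinite ∨ (s ∪ t).ncard ≤ a + b := by
  rcases hs with hs | hs
  · exact .inl (hs.mono Set.subset_union_left)
  rcases ht with ht | ht
  · exact .inl (ht.mono Set.subset_union_right)
  exact .inr ((Set.ncard_union_le s t).trans (add_le_add hs ht))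

theorem HasDerivAt.exists_neg_and_exists_pos {h : ℝ → ℝ} {x d : ℝ} (hd : HasDerivAt h d x)
    (hx : h x = 0) (hd0 : d ≠ 0) : (∃ u, h u < 0) ∧ ∃ v, 0 < h v := by
  constructor
  · by_contra! H
    exact hd0 (IsLocalMin.hasDerivAt_eq_zero (Eventually.of_forall fun y => hx ▸ H y) hd)
  · by_contra! H
    exact hd0 (IsLocalMax.hasDerivAt_eq_zero (Eventually.of_forall fun y => hx ▸ H y) hd)

theorem infinite_setOf_eq_zero_of_sign_change {f : ℝ × ℝ → ℝ} (hf : Continuous f) {b u v : ℝ}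
    (hu : f (b, u) < 0) (hv : 0 < f (b, v)) : {p | f p = 0}.Infinite := by
  have hU : {a | f (a, u) < 0 ∧ 0 < f (a, v)} ∈ 𝓝 b :=
    ((isOpen_lt (by fun_prop : Continuous fun a => f (a, u)) continuous_const).inter
      (isOpen_lt continuous_const (by fun_prop : Continuous fun a => f (a, v)))).mem_nhds
      ⟨hu, hv⟩
  refine Set.Infinite.of_image Prod.fst ((infinite_of_mem_nhds b hU).mono fun a ha => ?_)
  obtain ⟨t, -, ht⟩ := intermediate_value_uIcc
    (by fun_prop : Continuous fun t => f (a, t)).continuousOn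
    (Set.mem_uIcc.mpr (Or.inl ⟨ha.1.le, ha.2.le⟩))
  exact ⟨(a, t), ht, rfl⟩

namespace Matrix

variable {n R : Type*} [Fintype n] [DecidableEq n] [CommRing R]

theorem pow_card_dvd_det_of_dvd_rows (A : Matrix n n R) (d : R) (s : Finset n)
    (h : ∀ i ∈ s, ∀ j, d ∣ A i j) : d ^ #s ∣ A.det := by
  choose! B hB using h
  have hA : A = diagonal (fun i => if i ∈ s then d else 1) *
      of fun i j => if i ∈ s then B i j else A i j := by
    ext i j
    by_cases hi : i ∈ s
    · simp [diagonal_mul, hi, hB i hi j]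
    · simp [diagonal_mul, hi]
  rw [hA, det_mul, det_diagonal, prod_ite_mem, univ_inter, prod_const]
  exact dvd_mul_right _ _

theorem natDegree_det_le_sum (A : Matrix n n R[X]) (d : n → ℕ)
    (h : ∀ i j, (A i j).natDegree ≤ d j) : A.det.natDegree ≤ ∑ j, d j := by
  rw [det_apply]
  refine natDegree_sum_le_of_forall_le _ _ fun σ _ => ?_
  calc (Equiv.Perm.sign σ • ∏ j, A (σ j) j).natDegree
      ≤ (∏ j, A (σ j) j).natDegree := by
        rcases Int.units_eq_one_or (Equiv.Perm.sign σ) with hσ | hσ <;> simp [hσ]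
    _ ≤ ∑ j, (A (σ j) j).natDegree := natDegree_prod_le _ _
    _ ≤ ∑ j, d j := sum_le_sum fun j _ => h _ _

end Matrix

namespace Polynomial

section Sylvester

variable {R : Type*} [CommRing R] {f g : R[X]} {m n : ℕ}

theorem sylvester_apply_castAdd (hg : g.natDegree ≤ n) (i : Fin (m + n)) (j : Fin m) :
    sylvester f g m n i (Fin.castAdd n j) = (X ^ (j : ℕ) * g).coeff i := by
  rw [coeff_X_pow_mul']
  simp only [sylvester, Matrix.of_apply, Fin.addCases_left, Set.mem_Icc]
  rw [ite_and]
  split_ifs <;> try rfl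
  exact (coeff_eq_zero_of_natDegree_lt (by omega)).symm

theorem sylvester_apply_natAdd (hf : f.natDegree ≤ m) (i : Fin (m + n)) (j : Fin n) :
    sylvester f g m n i (Fin.natAdd m j) = (X ^ (j : ℕ) * f).coeff i := by
  rw [coeff_X_pow_mul']
  simp only [sylvester, Matrix.of_apply, Fin.addCases_right, Set.mem_Icc]
  rw [ite_and]
  split_ifs <;> try rfl
  exact (coeff_eq_zero_of_natDegree_lt (by omega)).symm

theorem eval_eq_sum_fin {p : R[X]} {N : ℕ} (hp : p.natDegree < N) (x : R) :
    p.eval x = ∑ i : Fin N, x ^ (i : ℕ) * p.coeff i := by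
  rw [eval_eq_sum_range' hp, ← Fin.sum_univ_eq_sum_range]
  simp only [mul_comm]

theorem powers_vecMul_sylvester_eq_zero (hf : f.natDegree ≤ m) (hg : g.natDegree ≤ n) {x : R}
    (hfx : f.eval x = 0) (hgx : g.eval x = 0) :
    (fun i : Fin (m + n) => x ^ (i : ℕ)) ᵥ* sylvester f g m n = 0 := by
  ext j
  simp only [vecMul, dotProduct, Pi.zero_apply]
  induction j using Fin.addCases with
  | left j =>
    simp_rw [sylvester_apply_castAdd hg]
    rw [← eval_eq_sum_fin, eval_mul, hgx, mul_zero]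
    calc (X ^ (j : ℕ) * g).natDegree ≤ j + n :=
          natDegree_mul_le.trans (add_le_add (natDegree_X_pow_le _) hg)
      _ < m + n := by omega
  | right j =>
    simp_rw [sylvester_apply_natAdd hf]
    rw [← eval_eq_sum_fin, eval_mul, hfx, mul_zero]
    calc (X ^ (j : ℕ) * f).natDegree ≤ j + m :=
          natDegree_mul_le.trans (add_le_add (natDegree_X_pow_le _) hf)
      _ < m + n := by omega

end Sylvester

/-- A common factor over the fraction field descends, by Gauss's lemma, to a common factor of the
same degree. -/
theorem exists_dvd_dvd_natDegree_pos_of_resultant_eq_zero {R : Type*} [CommRing R] [IsDomain R]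
    [NormalizedGCDMonoid R] {P Q : R[X]} (hP : P ≠ 0) (h : resultant P Q = 0) :
    ∃ d : R[X], d ∣ P ∧ d ∣ Q ∧ 0 < d.natDegree := by
  let K := FractionRing R
  have hinj : Function.Injective (algebraMap R K) := IsFractionRing.injective R K
  have hres : resultant (P.map (algebraMap R K)) (Q.map (algebraMap R K)) = 0 := by
    rw [natDegree_map_eq_of_injective hinj, natDegree_map_eq_of_injective hinj,
      resultant_map_map, h, map_zero]
  obtain ⟨g, hgP, hgQ, hg⟩ : ∃ g, g ∣ P.map (algebraMap R K) ∧ g ∣ Q.map (algebraMap R K) ∧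
      ¬IsUnit g := by
    simpa [IsRelPrime, ← isRelPrime_iff_isCoprime] using (resultant_eq_zero_iff.mp hres).2
  have hg0 : g ≠ 0 := by
    rintro rfl
    exact hP (map_injective _ hinj (by simpa using zero_dvd_iff.mp hgP))
  obtain ⟨a, ha, hmap⟩ := IsLocalization.integerNormalization_spec (nonZeroDivisors R) g
  set p := IsLocalization.integerNormalization (nonZeroDivisors R) g
  have ha' : algebraMap R K a ≠ 0 := (map_ne_zero_iff _ hinj).mpr (nonZeroDivisors.ne_zero ha)
  have hpg : p.map (algebraMap R K) = C (algebraMap R K a) * g := by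
    rw [hmap, Algebra.smul_def, algebraMap_apply]
  have hdg : p.primPart.map (algebraMap R K) ∣ g := by
    refine (isUnit_C.mpr ha'.isUnit).dvd_mul_left.mp ?_
    rw [← hpg]
    exact Polynomial.map_dvd _ p.primPart_dvd
  refine ⟨p.primPart, p.isPrimitive_primPart.dvd_of_fraction_map_dvd_fraction_map (hdg.trans hgP),
    p.isPrimitive_primPart.dvd_of_fraction_map_dvd_fraction_map (hdg.trans hgQ), ?_⟩
  rw [natDegree_primPart, ← natDegree_map_eq_of_injective hinj, hpg, natDegree_C_mul ha']
  exact natDegree_pos_iff_degree_pos.mpr (degree_pos_of_ne_zero_of_nonunit hg0 hg)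

theorem card_le_natDegree_of_pow_card_fiber_dvd {K L : Type*} [Field K] [DecidableEq K]
    (s : Finset (K × L)) {r : K[X]} (hr : r ≠ 0)
    (h : ∀ b, (X - C b) ^ #{p ∈ s | p.1 = b} ∣ r) : #s ≤ r.natDegree := by
  have hprod : ∏ b ∈ s.image Prod.fst, (X - C b) ^ #{p ∈ s | p.1 = b} ∣ r :=
    prod_dvd_of_coprime
      (((pairwise_coprime_X_sub_C Function.injective_id).set_pairwise _).mono' fun _ _ h =>
        h.pow) fun b _ => h b
  refine (natDegree_le_of_dvd hprod hr).trans' (le_of_eq ?_)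
  rw [natDegree_prod_of_monic _ _ fun b _ => (monic_X_sub_C b).pow _,
    card_eq_sum_card_image Prod.fst s]
  simp

end Polynomial

namespace Polynomial.Bivariate

section Swap

variable {R : Type*} [CommRing R]

theorem coeff_coeff_swap (P : R[X][X]) (i j : ℕ) :
    ((swap P).coeff i).coeff j = (P.coeff j).coeff i := by
  induction P using Polynomial.induction_on' with
  | add P Q hP hQ => simp [hP, hQ]
  | monomial n f =>
    induction f using Polynomial.induction_on' with
    | add f g hf hg => simp_all [map_add]
    | monomial m r =>
      rw [swap_monomial_monomial, coeff_monomial, coeff_monomial]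
      split_ifs <;> simp_all [coeff_monomial]

theorem natDegree_swap_le_iff {P : R[X][X]} {k : ℕ} :
    (swap P).natDegree ≤ k ↔ ∀ i, (P.coeff i).natDegree ≤ k := by
  simp only [natDegree_le_iff_coeff_eq_zero, Polynomial.ext_iff, coeff_coeff_swap, coeff_zero]
  exact ⟨fun h i j hj => h j hj i, fun h j hj i => h i j hj⟩

theorem natDegree_coeff_le_natDegree_swap (P : R[X][X]) (i : ℕ) :
    (P.coeff i).natDegree ≤ (swap P).natDegree :=
  natDegree_swap_le_iff.mp le_rfl i

theorem natDegree_swap_derivative_le (P : R[X][X]) :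
    (swap (derivative P)).natDegree ≤ (swap P).natDegree :=
  natDegree_swap_le_iff.mpr fun i => by
    rw [coeff_derivative]
    refine natDegree_mul_le.trans ?_
    rw [← Nat.cast_succ, natDegree_natCast, add_zero]
    exact natDegree_coeff_le_natDegree_swap P (i + 1)

theorem natDegree_swap_mul [IsDomain R] {P Q : R[X][X]} (hP : P ≠ 0) (hQ : Q ≠ 0) :
    (swap (P * Q)).natDegree = (swap P).natDegree + (swap Q).natDegree := by
  rw [map_mul, natDegree_mul] <;> simpa

theorem natDegree_resultant_le (P Q : R[X][X]) (m n : ℕ) :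
    (resultant P Q m n).natDegree ≤ m * (swap Q).natDegree + n * (swap P).natDegree := by
  have h := Matrix.natDegree_det_le_sum (sylvester P Q m n)
    (Fin.addCases (fun _ => (swap Q).natDegree) fun _ => (swap P).natDegree) fun i j => by
      induction j using Fin.addCases <;>
        simp only [sylvester, Matrix.of_apply, Fin.addCases_left, Fin.addCases_right] <;>
        split_ifs <;> simp [natDegree_coeff_le_natDegree_swap]
  simpa [resultant, Fin.sum_univ_add] using h

end Swap

section Resultant

variable {A : Type*} [CommRing A]

theorem X_sub_C_dvd_vandermonde_mul_sylvester {P Q : A[X][X]} {m n : ℕ}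
    (hP : P.natDegree ≤ m) (hQ : Q.natDegree ≤ n) {b : A} (c : Fin (m + n) → A) {i : Fin (m + n)}
    (hPi : P.evalEval b (c i) = 0) (hQi : Q.evalEval b (c i) = 0) (j : Fin (m + n)) :
    X - C b ∣ ((vandermonde c).map C * sylvester P Q m n) i j := by
  rw [dvd_iff_isRoot, IsRoot, ← coe_evalRingHom, ← Matrix.map_apply (f := evalRingHom b),
    Matrix.map_mul, Matrix.map_map]
  have hS : (sylvester P Q m n).map (evalRingHom b) =
      sylvester (P.map (evalRingHom b)) (Q.map (evalRingHom b)) m n := by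
    rw [sylvester_map_map]
    rfl
  have hV : (vandermonde c).map (evalRingHom b ∘ C) = vandermonde c := by
    ext
    simp
  rw [hS, hV]
  simpa [Matrix.mul_apply, vecMul, dotProduct] using congrFun
    (powers_vecMul_sylvester_eq_zero (natDegree_map_le.trans hP) (natDegree_map_le.trans hQ)
      (by rwa [map_evalRingHom_eval]) (by rwa [map_evalRingHom_eval])) j

theorem pow_card_dvd_resultant [IsDomain A] [Infinite A] {P Q : A[X][X]} {m n : ℕ}
    (hP : P.natDegree ≤ m) (hQ : Q.natDegree ≤ n) (b : A) (s : Finset A) (hs : #s ≤ m + n)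
    (hroot : ∀ x ∈ s, P.evalEval b x = 0 ∧ Q.evalEval b x = 0) :
    (X - C b) ^ #s ∣ resultant P Q m n := by
  classical
  obtain ⟨t, hst, ht⟩ := Infinite.exists_superset_card_eq s (m + n) hs
  let c : Fin (m + n) → A := fun i => t.equivFin.symm (Fin.cast ht.symm i)
  have hc : Function.Injective c := fun i j hij => by
    simpa [c, Fin.ext_iff] using t.equivFin.symm.injective (Subtype.ext hij)
  have hrows : #{i | c i ∈ s} = #s := by
    refine card_bij (fun i _ => c i) (fun i hi => (mem_filter.mp hi).2)
      (fun i _ j _ hij => hc hij) fun x hx => ?_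
    exact ⟨Fin.cast ht (t.equivFin ⟨x, hst hx⟩), by simp [hx, c], by simp [c]⟩
  have hdet := pow_card_dvd_det_of_dvd_rows ((vandermonde c).map C * sylvester P Q m n)
    (X - C b) {i | c i ∈ s} fun i hi =>
    X_sub_C_dvd_vandermonde_mul_sylvester hP hQ c (hroot _ (mem_filter.mp hi).2).1
      (hroot _ (mem_filter.mp hi).2).2
  rw [hrows, det_mul, ← RingHom.mapMatrix_apply, ← RingHom.map_det] at hdet
  refine (prime_X_sub_C b).pow_dvd_of_dvd_mul_left _ ?_ hdet
  rw [dvd_iff_isRoot, IsRoot, eval_C]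
  exact det_vandermonde_ne_zero_iff.mpr hc

end Resultant

section ZeroSet

variable {R : Type*} [CommRing R]

/-- `p.1` is the value of the inner variable (that of the coefficients), `p.2` that of the
outer one. -/
def zeroSet (P : R[X][X]) : Set (R × R) := {p | P.evalEval p.1 p.2 = 0}

theorem zeroSet_mul [IsDomain R] (P Q : R[X][X]) : zeroSet (P * Q) = zeroSet P ∪ zeroSet Q := by
  ext p
  simp [zeroSet, evalEval_mul]

theorem prod_univ_subset_zeroSet {P : R[X][X]} {b : R} (hb : P.map (evalRingHom b) = 0) :
    {b} ×ˢ Set.univ ⊆ zeroSet P := by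
  rintro ⟨a, t⟩ ⟨rfl : a = b, -⟩
  simp [zeroSet, ← map_evalRingHom_eval, hb]

theorem continuous_evalEval [TopologicalSpace R] [IsTopologicalRing R] (P : R[X][X]) :
    Continuous fun p : R × R => P.evalEval p.1 p.2 := by
  have h : ∀ p : R × R, P.evalEval p.1 p.2 =
      ∑ i ∈ range (P.natDegree + 1), (P.coeff i).eval p.1 * p.2 ^ i := by
    intro p
    simp [evalEval, eval_eq_sum_range (p := P), eval_finsetSum]
  simp_rw [h]
  fun_prop

variable {K : Type*} [Field K]

theorem infinite_zeroSet_inter_of_map_eq_zero [Infinite K] {P Q : K[X][X]} {b : K}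
    (hP : P.map (evalRingHom b) = 0) (hQ : Q.map (evalRingHom b) = 0) :
    (zeroSet P ∩ zeroSet Q).Infinite :=
  (Set.infinite_univ.prod_right (Set.singleton_nonempty b)).mono
    (Set.subset_inter (prod_univ_subset_zeroSet hP) (prod_univ_subset_zeroSet hQ))

theorem card_le_natDegree_of_evalEval_eq_zero {P : K[X][X]} {b : K}
    (hP : P.map (evalRingHom b) ≠ 0) (T : Finset K) (hT : ∀ x ∈ T, P.evalEval b x = 0) :
    #T ≤ P.natDegree :=
  (card_le_degree_of_subset_roots fun x hx =>
    (mem_roots hP).2 (by rw [IsRoot, map_evalRingHom_eval]; exact hT x hx)).trans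
    natDegree_map_le

theorem infinite_or_ncard_le_natDegree_resultant [Infinite K] {P Q : K[X][X]}
    (hres : resultant P Q ≠ 0) :
    (zeroSet P ∩ zeroSet Q).Infinite ∨
      (zeroSet P ∩ zeroSet Q).ncard ≤ (resultant P Q).natDegree := by
  classical
  refine or_iff_not_imp_left.mpr fun hinf => ?_
  have hfin := Set.not_infinite.mp hinf
  rw [Set.ncard_eq_toFinset_card _ hfin]
  refine card_le_natDegree_of_pow_card_fiber_dvd _ hres fun b => ?_
  set T := {p ∈ hfin.toFinset | p.1 = b}.image Prod.snd
  have hT : #T = #{p ∈ hfin.toFinset | p.1 = b} :=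
    card_image_of_injOn fun p hp q hq h =>
      Prod.ext ((mem_filter.1 hp).2.trans (mem_filter.1 hq).2.symm) h
  have hroot : ∀ x ∈ T, P.evalEval b x = 0 ∧ Q.evalEval b x = 0 := by
    simp only [T, mem_image, mem_filter, Set.Finite.mem_toFinset]
    rintro x ⟨⟨a, x⟩, ⟨⟨hP, hQ⟩, rfl⟩, rfl⟩
    exact ⟨hP, hQ⟩
  rw [← hT]
  refine pow_card_dvd_resultant le_rfl le_rfl b T ?_ hroot
  by_cases hPb : P.map (evalRingHom b) = 0
  · have hQb : Q.map (evalRingHom b) ≠ 0 := fun hQb =>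
      hinf (infinite_zeroSet_inter_of_map_eq_zero hPb hQb)
    exact (card_le_natDegree_of_evalEval_eq_zero hQb T fun x hx => (hroot x hx).2).trans
      (Nat.le_add_left _ _)
  · exact (card_le_natDegree_of_evalEval_eq_zero hPb T fun x hx => (hroot x hx).1).trans
      (Nat.le_add_right _ _)

theorem infinite_zeroSet_of_evalEval_derivative_ne_zero {P : ℝ[X][X]} {p : ℝ × ℝ}
    (hp : p ∈ zeroSet P) (hd : (derivative P).evalEval p.1 p.2 ≠ 0) : (zeroSet P).Infinite := by
  have hderiv : HasDerivAt (fun t => P.evalEval p.1 t) ((derivative P).evalEval p.1 p.2) p.2 := by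
    simp only [← map_evalRingHom_eval, ← derivative_map]
    exact Polynomial.hasDerivAt _ _
  obtain ⟨⟨u, hu⟩, v, hv⟩ := hderiv.exists_neg_and_exists_pos hp hd
  exact infinite_setOf_eq_zero_of_sign_change (b := p.1) (u := u) (v := v)
    (continuous_evalEval P) hu hv

theorem zeroSet_infinite_or_eq_inter_derivative (P : ℝ[X][X]) :
    (zeroSet P).Infinite ∨ zeroSet P = zeroSet P ∩ zeroSet (derivative P) := by
  by_cases h : ∃ p ∈ zeroSet P, (derivative P).evalEval p.1 p.2 ≠ 0
  · obtain ⟨p, hp, hd⟩ := h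
    exact .inl (infinite_zeroSet_of_evalEval_derivative_ne_zero hp hd)
  · simp only [not_exists, not_and, not_not] at h
    exact .inr (Set.left_eq_inter.mpr h)

theorem infinite_or_ncard_zeroSet_inter_le (P Q : ℝ[X][X]) (hP : P ≠ 0) (hQ : Q ≠ 0) :
    (zeroSet P ∩ zeroSet Q).Infinite ∨ (zeroSet P ∩ zeroSet Q).ncard ≤
      P.natDegree * (swap Q).natDegree + (swap P).natDegree * Q.natDegree := by
  by_cases hcf : ∃ d, d ∣ P ∧ d ∣ Q ∧ 0 < d.natDegree
  · obtain ⟨d, ⟨P', rfl⟩, ⟨Q', rfl⟩, hd⟩ := hcf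
    have hd0 : d ≠ 0 := left_ne_zero_of_mul hP
    have hP' : P' ≠ 0 := right_ne_zero_of_mul hP
    have hQ' : Q' ≠ 0 := right_ne_zero_of_mul hQ
    have hd' : derivative d ≠ 0 := fun h => hd.ne' (derivative_eq_zero.mp h)
    have hlt : (derivative d).natDegree < d.natDegree := natDegree_derivative_lt hd.ne'
    have hdegP : (d * P').natDegree = d.natDegree + P'.natDegree := natDegree_mul hd0 hP'
    have hdegQ : (d * Q').natDegree = d.natDegree + Q'.natDegree := natDegree_mul hd0 hQ'
    have hZd : (zeroSet d).Infinite ∨ (zeroSet d).ncard ≤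
        d.natDegree * (swap d).natDegree + (swap d).natDegree * d.natDegree := by
      refine (zeroSet_infinite_or_eq_inter_derivative d).elim .inl fun h => ?_
      rw [h]
      refine (infinite_or_ncard_zeroSet_inter_le d (derivative d) hd0 hd').imp_right
        fun h => h.trans (add_le_add ?_ ?_)
      · exact Nat.mul_le_mul_left _ (natDegree_swap_derivative_le d)
      · exact Nat.mul_le_mul_left _ hlt.le
    rw [zeroSet_mul, zeroSet_mul, ← Set.union_inter_distrib_left]
    refine (Set.infinite_or_ncard_union_le hZd
      (infinite_or_ncard_zeroSet_inter_le P' Q' hP' hQ')).imp_right fun h => h.trans ?_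
    rw [hdegP, hdegQ, natDegree_swap_mul hd0 hP', natDegree_swap_mul hd0 hQ']
    nlinarith
  · have hres : resultant P Q ≠ 0 := fun h =>
      hcf (exists_dvd_dvd_natDegree_pos_of_resultant_eq_zero hP h)
    refine (infinite_or_ncard_le_natDegree_resultant hres).imp_right fun h => h.trans ?_
    linarith [natDegree_resultant_le P Q P.natDegree Q.natDegree,
      mul_comm (swap P).natDegree Q.natDegree]
termination_by P.natDegree + Q.natDegree
decreasing_by all_goals subst_vars; omega

end ZeroSet

end Polynomial.Bivariate

namespace MvPolynomial

variable {R : Type*} [CommRing R]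

noncomputable def toBivariate : MvPolynomial (Fin 2) R ≃ₐ[R] R[X][X] :=
  (finSuccEquiv R 1).trans (Polynomial.mapAlgEquiv (uniqueAlgEquiv R (Fin 1)))

theorem toBivariate_X_zero : toBivariate (X 0 : MvPolynomial (Fin 2) R) = Polynomial.X := by
  simp [toBivariate, finSuccEquiv_X_zero]

theorem toBivariate_X_one :
    toBivariate (X 1 : MvPolynomial (Fin 2) R) = Polynomial.C Polynomial.X := by
  rw [show (X 1 : MvPolynomial (Fin 2) R) = X (Fin.succ 0) from rfl, toBivariate,
    AlgEquiv.trans_apply, finSuccEquiv_X_succ]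
  simp

theorem natDegree_toBivariate (F : MvPolynomial (Fin 2) R) :
    (toBivariate F).natDegree = F.degreeOf 0 := by
  rw [toBivariate, AlgEquiv.trans_apply, coe_mapAlgEquiv,
    natDegree_map_eq_of_injective (uniqueAlgEquiv R (Fin 1)).injective, natDegree_finSuccEquiv]

theorem swap_toBivariate (F : MvPolynomial (Fin 2) R) :
    swap (toBivariate F) = toBivariate (rename (Equiv.swap 0 1) F) := by
  show ((swap : R[X][X] ≃ₐ[R] R[X][X]).toAlgHom.comp toBivariate.toAlgHom) F =
    (toBivariate.toAlgHom.comp (rename (Equiv.swap 0 1))) F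
  congr 1
  refine algHom_ext fun i => ?_
  fin_cases i <;> simp [toBivariate_X_zero, toBivariate_X_one, swap_X, swap_Y]

theorem natDegree_swap_toBivariate (F : MvPolynomial (Fin 2) R) :
    (swap (toBivariate F)).natDegree = F.degreeOf 1 := by
  rw [swap_toBivariate, natDegree_toBivariate,
    ← degreeOf_rename_of_injective (Equiv.swap (0 : Fin 2) 1).injective 1, Equiv.swap_apply_right]

theorem evalEval_toBivariate (F : MvPolynomial (Fin 2) R) (x : Fin 2 → R) :
    (toBivariate F).evalEval (x 1) (x 0) = eval x F := by
  rw [← coe_aevalAeval_eq_evalEval, ← coe_aeval_eq_eval]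
  show ((aevalAeval (x 1) (x 0)).comp toBivariate.toAlgHom) F = aeval x F
  congr 1
  refine algHom_ext fun i => ?_
  fin_cases i <;> simp [toBivariate_X_zero, toBivariate_X_one]

end MvPolynomial

theorem real_bezout_bihomogeneous (F G : MvPolynomial (Fin 2) ℝ) (hF : F ≠ 0) (hG : G ≠ 0)
    (m₁ m₂ n₁ n₂ : ℕ)
    (hm₁ : F.degreeOf 0 = m₁) (hm₂ : F.degreeOf 1 = m₂)
    (hn₁ : G.degreeOf 0 = n₁) (hn₂ : G.degreeOf 1 = n₂) :
    {x : Fin 2 → ℝ | MvPolynomial.eval x F = 0 ∧ MvPolynomial.eval x G = 0}.Infinite ∨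
    {x : Fin 2 → ℝ | MvPolynomial.eval x F = 0 ∧ MvPolynomial.eval x G = 0}.ncard ≤
      m₁ * n₂ + m₂ * n₁ := by
  let e : (Fin 2 → ℝ) ≃ ℝ × ℝ := (finTwoArrowEquiv ℝ).trans (Equiv.prodComm ℝ ℝ)
  set P := MvPolynomial.toBivariate F
  set Q := MvPolynomial.toBivariate G
  have hS : {x : Fin 2 → ℝ | MvPolynomial.eval x F = 0 ∧ MvPolynomial.eval x G = 0} =
      e ⁻¹' (zeroSet P ∩ zeroSet Q) := by
    ext x
    simp [e, zeroSet, P, Q, MvPolynomial.evalEval_toBivariate]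
  rw [hS]
  refine (infinite_or_ncard_zeroSet_inter_le P Q (by simpa [P]) (by simpa [Q])).imp
    (fun h => h.preimage (by simp)) fun h => ?_
  rw [Set.ncard_preimage_of_injective_subset_range e.injective (by simp)]
  simpa [P, Q, MvPolynomial.natDegree_toBivariate, MvPolynomial.natDegree_swap_toBivariate,
    hm₁, hm₂, hn₁, hn₂] using h
end

section
/- Let P₁ and P₂ be non-constant complex polynomials of degrees n₁ and n₂. The following three conditions are equivalent: (i) the lemniscates 𝔏_{P₁} and 𝔏_{P₂} have more than 2·n₁·n₂ common points; (ii) 𝔏_{P₁} ∩ 𝔏_{P₂} is infinite; (iii) there exist a complex polynomial P, positive integers m₁ and m₂, and a constant c ∈ ℂ with |c| = 1 such that P₁ = P^{m₁} and P₂ = c·P^{m₂}. -/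
/-!
For `z ∈ 𝔏_{P₁} ∩ 𝔏_{P₂}` the point `(z, z̄)` is a common zero of `Fᵢ(x, y) = Pᵢ(x) P̄ᵢ(y) - 1`.
The resultant of `F₁` and `F₂` with respect to `y` is a polynomial in `x` of degree at most
`2 n₁ n₂`, so more than `2 n₁ n₂` common points make it vanish, and `F₁, F₂` acquire a common root
`y` in an extension field `L` of `ℂ(x)`. For `r ∈ ℂ`, a valuation `v` of `L` with `v(x - r) = π < 1`
turns `Pᵢ(x) P̄ᵢ(y) = 1` into `π ^ mult_r(Pᵢ) * max(1, v y) ^ nᵢ = 1`, so the root multiplicities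
of `P₁` and `P₂` are in the ratio `n₁ : n₂`. Hence `P₁` and `P₂` are powers of one polynomial up to
constant factors, and a single common point makes the constant unimodular.
-/

/-- The lemniscate of a polynomial `P`: the set of `z ∈ ℂ` with `|P(z)| = 1`. -/
noncomputable def Polynomial.lemniscate (P : Polynomial ℂ) : Set ℂ :=
  {z : ℂ | ‖P.eval z‖ = 1}

open Polynomial

namespace Polynomial

theorem lemniscate_pow (P : ℂ[X]) {m : ℕ} (hm : m ≠ 0) : (P ^ m).lemniscate = P.lemniscate := by
  ext z
  simp [lemniscate, pow_eq_one_iff_of_nonneg (norm_nonneg _) hm]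

theorem lemniscate_C_mul_pow (P : ℂ[X]) {c : ℂ} (hc : ‖c‖ = 1) {m : ℕ} (hm : m ≠ 0) :
    (C c * P ^ m).lemniscate = P.lemniscate := by
  rw [← lemniscate_pow P hm]
  ext z
  simp [lemniscate, hc]

theorem lemniscate_infinite {P : ℂ[X]} (hP : 0 < P.natDegree) : P.lemniscate.Infinite := by
  have hcircle : (Metric.sphere (0 : ℂ) 1).Infinite :=
    (isPreconnected_sphere (by simp) 0 1).infinite_of_nontrivial
      ⟨1, by simp, -1, by simp, by norm_num⟩
  refine Set.Infinite.of_image P.eval (hcircle.mono fun w hw => ?_)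
  obtain ⟨z, rfl⟩ := IsAlgClosed.eval_surjective hP.ne' w
  exact ⟨z, by simpa [lemniscate] using hw, rfl⟩

/-- `P(x) P̄(y) - 1` as a polynomial in `y` over `ℂ[x]`, where `P̄` has the conjugate
coefficients; since `P̄(z̄) = conj (P(z))`, it vanishes at `(z, z̄)` iff `z ∈ P.lemniscate`. -/
noncomputable def lemniscatePoly (P : ℂ[X]) : ℂ[X][X] :=
  C P * (P.map (starRingEnd ℂ)).map C - 1

theorem natDegree_lemniscatePoly (P : ℂ[X]) : (lemniscatePoly P).natDegree = P.natDegree := by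
  rcases eq_or_ne P 0 with rfl | hP
  · simp [lemniscatePoly]
  rw [lemniscatePoly, ← C_1, natDegree_sub_C, natDegree_C_mul hP,
    natDegree_map_eq_of_injective C_injective, natDegree_map_eq_of_injective (RingHom.injective _)]

theorem natDegree_coeff_lemniscatePoly_le (P : ℂ[X]) (k : ℕ) :
    ((lemniscatePoly P).coeff k).natDegree ≤ P.natDegree := by
  rw [lemniscatePoly, coeff_sub, coeff_C_mul, coeff_map, coeff_one]
  refine (natDegree_sub_le_of_le (natDegree_mul_C_le _ _) (n := 0) ?_).trans (by simp)
  split_ifs <;> simp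

theorem eval₂_lemniscatePoly {S : Type*} [CommRing S] (P : ℂ[X]) (φ : ℂ[X] →+* S) (y : S) :
    (lemniscatePoly P).eval₂ φ y = φ P * (P.map (starRingEnd ℂ)).eval₂ (φ.comp C) y - 1 := by
  rw [lemniscatePoly, eval₂_sub, eval₂_one, eval₂_mul, eval₂_C, eval₂_map]

theorem lemniscatePoly_map_evalRingHom (P : ℂ[X]) (z : ℂ) :
    (lemniscatePoly P).map (evalRingHom z) = C (P.eval z) * P.map (starRingEnd ℂ) - 1 := by
  have hC : (evalRingHom z).comp (C.comp (starRingEnd ℂ)) = starRingEnd ℂ :=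
    RingHom.ext fun _ => eval_C
  simp [lemniscatePoly, Polynomial.map_map, hC]

theorem natDegree_lemniscatePoly_map_evalRingHom {P : ℂ[X]} {z : ℂ} (hz : P.eval z ≠ 0) :
    ((lemniscatePoly P).map (evalRingHom z)).natDegree = P.natDegree := by
  rw [lemniscatePoly_map_evalRingHom, ← C_1, natDegree_sub_C, natDegree_C_mul hz,
    natDegree_map_eq_of_injective (RingHom.injective _)]

theorem isRoot_lemniscatePoly_map_evalRingHom {P : ℂ[X]} {z : ℂ} (hz : z ∈ P.lemniscate) :
    ((lemniscatePoly P).map (evalRingHom z)).IsRoot (starRingEnd ℂ z) := by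
  rw [IsRoot, lemniscatePoly_map_evalRingHom, eval_sub, eval_mul, eval_C, eval_one, sub_eq_zero,
    eval_map, eval₂_at_apply, Complex.mul_conj, Complex.normSq_eq_norm_sq, hz.out]
  norm_num

end Polynomial

theorem Matrix.natDegree_det_le_sum_s8 {n R : Type*} [Fintype n] [DecidableEq n] [CommRing R]
    (M : Matrix n n R[X]) (b : n → ℕ) (hM : ∀ i j, (M i j).natDegree ≤ b j) :
    M.det.natDegree ≤ ∑ j, b j := by
  rw [Matrix.det_apply]
  refine natDegree_sum_le_of_forall_le _ _ fun σ _ => (natDegree_smul_le _ _).trans ?_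
  exact (natDegree_prod_le _ _).trans (Finset.sum_le_sum fun j _ => hM _ _)

namespace Polynomial

theorem natDegree_resultant_le {R : Type*} [CommRing R] {f g : R[X][X]} {a b : ℕ}
    (hf : ∀ k, (f.coeff k).natDegree ≤ a) (hg : ∀ k, (g.coeff k).natDegree ≤ b) (m n : ℕ) :
    (resultant f g m n).natDegree ≤ m * b + n * a := by
  classical
  have := Matrix.natDegree_det_le_sum_s8 (sylvester f g m n) (Fin.addCases (fun _ => b) fun _ => a)
  simp only [Fin.sum_univ_add, Fin.addCases_left, Fin.addCases_right, Finset.sum_const,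
    Finset.card_univ, Fintype.card_fin, smul_eq_mul] at this
  refine this fun i j => ?_
  induction j using Fin.addCases <;> simp only [sylvester, Matrix.of_apply, Fin.addCases_left,
    Fin.addCases_right] <;> split_ifs <;> simp [hf, hg]

theorem resultant_eq_zero_of_isRoot {K : Type*} [Field K] {f g : K[X]} (hf : f ≠ 0) {a : K}
    (hfa : f.IsRoot a) (hga : g.IsRoot a) : resultant f g = 0 :=
  resultant_eq_zero_iff.mpr ⟨.inl hf, fun hfg => by
    simpa [hfa.eq_zero, hga.eq_zero] using aeval_ne_zero_of_isCoprime hfg a⟩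

theorem exists_irreducible_dvd_map_of_resultant_eq_zero {R : Type*} [CommRing R] [IsDomain R]
    {f g : R[X]} (hf : f ≠ 0) (h : resultant f g = 0) :
    ∃ p : (FractionRing R)[X], Irreducible p ∧
      p ∣ f.map (algebraMap R (FractionRing R)) ∧ p ∣ g.map (algebraMap R (FractionRing R)) := by
  have hinj := IsFractionRing.injective R (FractionRing R)
  have hres : resultant (f.map (algebraMap R (FractionRing R)))
      (g.map (algebraMap R (FractionRing R))) = 0 := by
    rw [natDegree_map_eq_of_injective hinj, natDegree_map_eq_of_injective hinj,
      resultant_map_map, h, map_zero]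
  by_contra! H
  refine (resultant_eq_zero_iff.mp hres).2 (isCoprime_of_irreducible_dvd ?_ H)
  simp [Polynomial.map_eq_zero_iff hinj, hf]

end Polynomial

namespace Valuation

variable {R L Γ₀ : Type*} [Semiring R] [CommRing L] [LinearOrderedCommGroupWithZero Γ₀]
  (v : Valuation L Γ₀) {ψ : R →+* L}

theorem map_eval₂_le_one (hψ : ∀ c, v (ψ c) ≤ 1) (Q : R[X]) {y : L} (hy : v y ≤ 1) :
    v (Q.eval₂ ψ y) ≤ 1 := by
  rw [eval₂_eq_sum_range]
  refine v.map_sum_le fun i _ => ?_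
  rw [map_mul, map_pow]
  exact mul_le_one' (hψ _) (pow_le_one' hy _)

theorem map_eval₂_eq_pow_natDegree (hψ : ∀ c, c ≠ 0 → v (ψ c) = 1) {Q : R[X]} (hQ : Q ≠ 0)
    {y : L} (hy : 1 < v y) : v (Q.eval₂ ψ y) = v y ^ Q.natDegree := by
  have hterm : ∀ i, v (ψ (Q.coeff i) * y ^ i) ≤ v y ^ i := fun i => by
    rw [map_mul, map_pow]
    rcases eq_or_ne (Q.coeff i) 0 with h | h
    · simp [h]
    · rw [hψ _ h, one_mul]
  have htop : v (ψ Q.leadingCoeff * y ^ Q.natDegree) = v y ^ Q.natDegree := by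
    rw [map_mul, map_pow, hψ _ (leadingCoeff_ne_zero.mpr hQ), one_mul]
  have hlower : v (∑ i ∈ Finset.range Q.natDegree, ψ (Q.coeff i) * y ^ i) < v y ^ Q.natDegree :=
    v.map_sum_lt (pow_ne_zero _ (zero_lt_one.trans hy).ne') fun i hi =>
      (hterm i).trans_lt (pow_lt_pow_right₀ hy (Finset.mem_range.mp hi))
  rw [eval₂_eq_sum_range, Finset.sum_range_succ, ← leadingCoeff,
    v.map_add_eq_of_lt_right (htop ▸ hlower), htop]

end Valuation

namespace Polynomial

theorem exists_valuation_eq_pow_rootMultiplicity {k L : Type*} [Field k] [Field L]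
    {φ : k[X] →+* L} (hφ : Function.Injective φ) (r : k) :
    ∃ B : ValuationSubring L, B.valuation (φ (X - C r)) < 1 ∧
      ∀ q : k[X], q ≠ 0 → B.valuation (φ q) = B.valuation (φ (X - C r)) ^ q.rootMultiplicity r := by
  obtain ⟨B, hφB, hB⟩ := Ideal.image_subset_nonunits_valuationSubring
    (Ideal.span {(⟨φ (X - C r), φ.mem_range_self _⟩ : φ.range)}) <| by
      rw [Ne, Ideal.span_singleton_eq_top]
      intro hunit
      obtain ⟨⟨_, q, rfl⟩, hq⟩ := isUnit_iff_exists_inv.mp hunit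
      exact not_isUnit_X_sub_C r (.of_mul_eq_one q (hφ (by simpa using congrArg Subtype.val hq)))
  set v := B.valuation
  have hle : ∀ q, v (φ q) ≤ 1 := fun q => (B.valuation_le_one_iff _).mpr (hφB (φ.mem_range_self q))
  have hπ : v (φ (X - C r)) < 1 :=
    B.mem_nonunits_iff.mp (hB ⟨_, Ideal.subset_span rfl, rfl⟩)
  have hC : ∀ c : k, c ≠ 0 → v (φ (C c)) = 1 := fun c hc => by
    refine le_antisymm (hle _) ?_
    calc 1 = v (φ (C c)) * v (φ (C c⁻¹)) := by
          rw [← map_mul, ← map_mul, ← C_mul, mul_inv_cancel₀ hc, C_1, map_one, map_one]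
      _ ≤ v (φ (C c)) := mul_le_of_le_one_right' (hle _)
  have hcoprime : ∀ q : k[X], q.eval r ≠ 0 → v (φ q) = 1 := fun q hq => by
    obtain ⟨s, hs⟩ := X_sub_C_dvd_sub_C_eval (p := q) (a := r)
    have hsmall : v (φ ((X - C r) * s)) < 1 := by
      rw [map_mul, map_mul]
      exact mul_lt_one_of_lt_of_le hπ (hle s)
    rw [sub_eq_iff_eq_add'.mp hs, map_add, v.map_add_eq_of_lt_left ((hC _ hq).symm ▸ hsmall),
      hC _ hq]
  refine ⟨B, hπ, fun q hq => ?_⟩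
  conv_lhs => rw [← pow_mul_divByMonic_rootMultiplicity_eq q r]
  rw [map_mul, map_mul, map_pow, map_pow,
    hcoprime _ (eval_divByMonic_pow_rootMultiplicity_ne_zero r hq), mul_one]

section

variable {k L : Type*} [Field k] [Field L] {φ : k[X] →+* L}

theorem pow_rootMultiplicity_mul_max_pow_natDegree_eq_one {Γ₀ : Type*}
    [LinearOrderedCommGroupWithZero Γ₀] {v : Valuation L Γ₀} {r : k}
    (hv : ∀ q : k[X], q ≠ 0 → v (φ q) = v (φ (X - C r)) ^ q.rootMultiplicity r)
    (hπ : v (φ (X - C r)) < 1) {P Q : k[X]} (hP : P ≠ 0) (hQ : Q ≠ 0) {y : L}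
    (hy : φ P * Q.eval₂ (φ.comp C) y = 1) :
    v (φ (X - C r)) ^ P.rootMultiplicity r * max 1 (v y) ^ Q.natDegree = 1 := by
  have hC : ∀ c : k, c ≠ 0 → v (φ.comp C c) = 1 := fun c hc => by
    rw [RingHom.comp_apply, hv _ (C_ne_zero.mpr hc), rootMultiplicity_C, pow_zero]
  have hC_le : ∀ c : k, v (φ.comp C c) ≤ 1 := fun c => by
    rcases eq_or_ne c 0 with rfl | hc
    · simp
    · exact (hC c hc).le
  have hmul : v (φ P) * v (Q.eval₂ (φ.comp C) y) = 1 := by rw [← map_mul, hy, map_one]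
  rw [← hv P hP]
  rcases le_or_gt (v y) 1 with hy1 | hy1
  · have hle : v (Q.eval₂ (φ.comp C) y) ≤ 1 := v.map_eval₂_le_one hC_le Q hy1
    rw [max_eq_left hy1, one_pow, mul_one]
    refine le_antisymm ?_ ?_
    · rw [hv P hP]; exact pow_le_one' hπ.le _
    · calc 1 = v (φ P) * v (Q.eval₂ (φ.comp C) y) := hmul.symm
        _ ≤ v (φ P) := mul_le_of_le_one_right' hle
  · rwa [max_eq_right hy1.le, ← v.map_eval₂_eq_pow_natDegree hC hQ hy1]

theorem natDegree_mul_rootMultiplicity_eq_of_eval₂_eq_one (hφ : Function.Injective φ)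
    {P₁ P₂ Q₁ Q₂ : k[X]} (hP₁ : P₁ ≠ 0) (hP₂ : P₂ ≠ 0) (hQ₁ : Q₁ ≠ 0) (hQ₂ : Q₂ ≠ 0) {y : L}
    (hy₁ : φ P₁ * Q₁.eval₂ (φ.comp C) y = 1) (hy₂ : φ P₂ * Q₂.eval₂ (φ.comp C) y = 1) (r : k) :
    Q₂.natDegree * P₁.rootMultiplicity r = Q₁.natDegree * P₂.rootMultiplicity r := by
  obtain ⟨B, hπ, hv⟩ := exists_valuation_eq_pow_rootMultiplicity hφ r
  set π := B.valuation (φ (X - C r))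
  set s := max 1 (B.valuation y)
  have e₁ := pow_rootMultiplicity_mul_max_pow_natDegree_eq_one hv hπ hP₁ hQ₁ hy₁
  have e₂ := pow_rootMultiplicity_mul_max_pow_natDegree_eq_one hv hπ hP₂ hQ₂ hy₂
  have hπ0 : 0 < π := pos_iff_ne_zero.mpr <|
    B.valuation.ne_zero_iff.mpr ((map_ne_zero_iff φ hφ).mpr (X_sub_C_ne_zero r))
  have hs0 : s ^ (Q₁.natDegree * Q₂.natDegree) ≠ 0 :=
    pow_ne_zero _ (zero_lt_one.trans_le (le_max_left _ _)).ne'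
  have hpow : π ^ (P₁.rootMultiplicity r * Q₂.natDegree) =
      π ^ (P₂.rootMultiplicity r * Q₁.natDegree) := mul_right_cancel₀ hs0 <|
    calc π ^ (P₁.rootMultiplicity r * Q₂.natDegree) * s ^ (Q₁.natDegree * Q₂.natDegree)
        = (π ^ P₁.rootMultiplicity r * s ^ Q₁.natDegree) ^ Q₂.natDegree := by
          rw [mul_pow, ← pow_mul, ← pow_mul]
      _ = (π ^ P₂.rootMultiplicity r * s ^ Q₂.natDegree) ^ Q₁.natDegree := by
          rw [e₁, e₂, one_pow, one_pow]
      _ = π ^ (P₂.rootMultiplicity r * Q₁.natDegree) * s ^ (Q₁.natDegree * Q₂.natDegree) := by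
          rw [mul_pow, ← pow_mul, ← pow_mul, mul_comm Q₂.natDegree]
  rw [mul_comm, mul_comm Q₁.natDegree]
  exact pow_right_injective₀ hπ0 hπ.ne hpow

end

theorem resultant_lemniscatePoly_eq_zero {P₁ P₂ : ℂ[X]} (h₁ : 0 < P₁.natDegree) {T : Finset ℂ}
    (hT : ↑T ⊆ P₁.lemniscate ∩ P₂.lemniscate) (hcard : 2 * P₁.natDegree * P₂.natDegree < T.card) :
    resultant (lemniscatePoly P₁) (lemniscatePoly P₂) = 0 := by
  refine eq_zero_of_natDegree_lt_card_of_eval_eq_zero' _ T (fun z hz => ?_) ?_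
  · obtain ⟨hz₁, hz₂⟩ := hT hz
    have hne : ∀ {P : ℂ[X]}, z ∈ P.lemniscate → P.eval z ≠ 0 := fun h h0 => by
      simp [lemniscate, h0] at h
    rw [← coe_evalRingHom, ← resultant_map_map, natDegree_lemniscatePoly, natDegree_lemniscatePoly,
      ← natDegree_lemniscatePoly_map_evalRingHom (hne hz₁),
      ← natDegree_lemniscatePoly_map_evalRingHom (hne hz₂)]
    refine resultant_eq_zero_of_isRoot ?_ (isRoot_lemniscatePoly_map_evalRingHom hz₁)
      (isRoot_lemniscatePoly_map_evalRingHom hz₂)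
    exact ne_zero_of_natDegree_gt (n := 0) (natDegree_lemniscatePoly_map_evalRingHom (hne hz₁) ▸ h₁)
  · rw [natDegree_lemniscatePoly, natDegree_lemniscatePoly]
    calc _ ≤ P₁.natDegree * P₂.natDegree + P₂.natDegree * P₁.natDegree :=
          natDegree_resultant_le (natDegree_coeff_lemniscatePoly_le P₁)
            (natDegree_coeff_lemniscatePoly_le P₂) _ _
      _ < T.card := by linarith

theorem natDegree_mul_rootMultiplicity_eq_of_resultant_lemniscatePoly_eq_zero {P₁ P₂ : ℂ[X]}
    (h₁ : 0 < P₁.natDegree) (hP₂ : P₂ ≠ 0)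
    (h : resultant (lemniscatePoly P₁) (lemniscatePoly P₂) = 0) (r : ℂ) :
    P₂.natDegree * P₁.rootMultiplicity r = P₁.natDegree * P₂.rootMultiplicity r := by
  have hP₁ : P₁ ≠ 0 := ne_zero_of_natDegree_gt h₁
  obtain ⟨p, hp, hp₁, hp₂⟩ := exists_irreducible_dvd_map_of_resultant_eq_zero
    (ne_zero_of_natDegree_gt ((natDegree_lemniscatePoly P₁).symm ▸ h₁)) h
  have : Fact (Irreducible p) := ⟨hp⟩
  set K := FractionRing ℂ[X]
  set φ : ℂ[X] →+* AdjoinRoot p := (algebraMap K (AdjoinRoot p)).comp (algebraMap ℂ[X] K)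
  have hφ : Function.Injective φ :=
    (algebraMap K _).injective.comp (IsFractionRing.injective ℂ[X] K)
  have hroot : ∀ {P : ℂ[X]}, p ∣ (lemniscatePoly P).map (algebraMap ℂ[X] K) →
      φ P * (P.map (starRingEnd ℂ)).eval₂ (φ.comp C) (AdjoinRoot.root p) = 1 := fun hdvd => by
    rw [← sub_eq_zero, ← eval₂_lemniscatePoly, ← eval₂_map, ← aeval_def, AdjoinRoot.aeval_eq,
      AdjoinRoot.mk_eq_zero]
    exact hdvd
  have hconj : ∀ P : ℂ[X], (P.map (starRingEnd ℂ)).natDegree = P.natDegree :=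
    natDegree_map_eq_of_injective (RingHom.injective _)
  rw [← hconj P₁, ← hconj P₂]
  exact natDegree_mul_rootMultiplicity_eq_of_eval₂_eq_one hφ hP₁ hP₂
    ((Polynomial.map_ne_zero_iff (RingHom.injective _)).mpr hP₁)
    ((Polynomial.map_ne_zero_iff (RingHom.injective _)).mpr hP₂)
    (hroot hp₁) (hroot hp₂) r

end Polynomial

theorem Multiset.exists_eq_nsmul_of_nsmul_eq_nsmul {α : Type*} {A B : Multiset α} {n₁ n₂ : ℕ}
    (hn₁ : 0 < n₁) (hn₂ : 0 < n₂) (h : n₂ • A = n₁ • B) :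
    ∃ (S : Multiset α) (m₁ m₂ : ℕ), 0 < m₁ ∧ 0 < m₂ ∧ A = m₁ • S ∧ B = m₂ • S := by
  classical
  have hd : 0 < n₁.gcd n₂ := Nat.gcd_pos_of_pos_left _ hn₁
  set m₁ := n₁ / n₁.gcd n₂
  set m₂ := n₂ / n₁.gcd n₂
  have hm₁ : 0 < m₁ := Nat.div_pos (Nat.gcd_le_left _ hn₁) hd
  have hm₂ : 0 < m₂ := Nat.div_pos (Nat.gcd_le_right _ hn₂) hd
  have hcount : ∀ a, m₂ * A.count a = m₁ * B.count a := fun a => by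
    refine Nat.eq_of_mul_eq_mul_left hd ?_
    rw [← mul_assoc, ← mul_assoc, Nat.mul_div_cancel' (Nat.gcd_dvd_right _ _),
      Nat.mul_div_cancel' (Nat.gcd_dvd_left _ _), ← count_nsmul, ← count_nsmul, h]
  obtain ⟨S, rfl⟩ := exists_smul_of_dvd_count A fun a _ =>
    (Nat.coprime_div_gcd_div_gcd hd).dvd_of_dvd_mul_left ⟨_, hcount a⟩
  refine ⟨S, m₁, m₂, hm₁, hm₂, rfl, ext.mpr fun a => Nat.eq_of_mul_eq_mul_left hm₁ ?_⟩
  rw [← hcount, count_nsmul, count_nsmul, mul_left_comm]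

namespace Polynomial

theorem exists_eq_C_mul_pow_of_natDegree_mul_rootMultiplicity_eq {k : Type*} [Field k]
    [IsAlgClosed k] {P₁ P₂ : k[X]} (h₁ : 0 < P₁.natDegree) (h₂ : 0 < P₂.natDegree)
    (h : ∀ r, P₂.natDegree * P₁.rootMultiplicity r = P₁.natDegree * P₂.rootMultiplicity r) :
    ∃ (P : k[X]) (m₁ m₂ : ℕ) (c : k), 0 < m₁ ∧ 0 < m₂ ∧ P₁ = P ^ m₁ ∧ P₂ = C c * P ^ m₂ := by
  classical
  obtain ⟨S, m₁, m₂, hm₁, hm₂, hS₁, hS₂⟩ := Multiset.exists_eq_nsmul_of_nsmul_eq_nsmul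
    (A := P₁.roots) (B := P₂.roots) h₁ h₂
    (Multiset.ext.mpr fun r => by simp only [Multiset.count_nsmul, count_roots, h])
  set Q := (S.map fun a => X - C a).prod
  have hQ : ∀ {P : k[X]} {m : ℕ}, P.roots = m • S → P = C P.leadingCoeff * Q ^ m := fun hP =>
    (C_leadingCoeff_mul_prod_multiset_X_sub_C IsAlgClosed.card_roots_eq_natDegree).symm.trans
      (by rw [hP, Multiset.map_nsmul, Multiset.prod_nsmul])
  obtain ⟨γ, hγ⟩ := IsAlgClosed.exists_pow_nat_eq P₁.leadingCoeff hm₁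
  have hγ0 : γ ≠ 0 := by
    rintro rfl
    exact leadingCoeff_ne_zero.mpr (ne_zero_of_natDegree_gt h₁) (by rw [← hγ, zero_pow hm₁.ne'])
  refine ⟨C γ * Q, m₁, m₂, P₂.leadingCoeff / γ ^ m₂, hm₁, hm₂, ?_, ?_⟩
  · rw [mul_pow, ← C_pow, hγ, ← hQ hS₁]
  · rw [mul_pow, ← mul_assoc, ← C_pow, ← C_mul, div_mul_cancel₀ _ (pow_ne_zero _ hγ0), ← hQ hS₂]

theorem exists_eq_C_mul_pow_of_card_lemniscate_inter_gt {P₁ P₂ : ℂ[X]} (h₁ : 0 < P₁.natDegree)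
    (h₂ : 0 < P₂.natDegree) {T : Finset ℂ} (hT : ↑T ⊆ P₁.lemniscate ∩ P₂.lemniscate)
    (hcard : 2 * P₁.natDegree * P₂.natDegree < T.card) :
    ∃ (P : ℂ[X]) (m₁ m₂ : ℕ) (c : ℂ), 0 < m₁ ∧ 0 < m₂ ∧ ‖c‖ = 1 ∧
      P₁ = P ^ m₁ ∧ P₂ = C c * P ^ m₂ := by
  obtain ⟨P, m₁, m₂, c, hm₁, hm₂, rfl, rfl⟩ :=
    exists_eq_C_mul_pow_of_natDegree_mul_rootMultiplicity_eq h₁ h₂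
      (natDegree_mul_rootMultiplicity_eq_of_resultant_lemniscatePoly_eq_zero h₁
        (ne_zero_of_natDegree_gt h₂)
        (resultant_lemniscatePoly_eq_zero h₁ hT hcard))
  obtain ⟨z, hz⟩ : T.Nonempty := Finset.card_pos.mp (by omega)
  obtain ⟨hz₁, hz₂⟩ := hT hz
  rw [lemniscate_pow P hm₁.ne'] at hz₁
  refine ⟨P, m₁, m₂, c, hm₁, hm₂, ?_, rfl, rfl⟩
  simpa [lemniscate, hz₁.out] using hz₂.out

theorem lemniscate_inter_infinite_of_exists_eq_C_mul_pow {P₁ P₂ : ℂ[X]} (h₁ : 0 < P₁.natDegree)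
    (h : ∃ (P : ℂ[X]) (m₁ m₂ : ℕ) (c : ℂ), 0 < m₁ ∧ 0 < m₂ ∧ ‖c‖ = 1 ∧
      P₁ = P ^ m₁ ∧ P₂ = C c * P ^ m₂) :
    (P₁.lemniscate ∩ P₂.lemniscate).Infinite := by
  obtain ⟨P, m₁, m₂, c, hm₁, hm₂, hc, rfl, rfl⟩ := h
  rw [natDegree_pow] at h₁
  rw [lemniscate_pow P hm₁.ne', lemniscate_C_mul_pow P hc hm₂.ne', Set.inter_self]
  exact lemniscate_infinite (Nat.pos_of_mul_pos_left h₁)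

end Polynomial

theorem polynomial_lemniscate_intersection_tfae
    (P₁ P₂ : Polynomial ℂ) (n₁ n₂ : ℕ)
    (h₁ : 0 < P₁.natDegree) (h₂ : 0 < P₂.natDegree)
    (hd₁ : P₁.natDegree = n₁) (hd₂ : P₂.natDegree = n₂) :
    ((∃ T : Finset ℂ, ↑T ⊆ P₁.lemniscate ∩ P₂.lemniscate ∧ 2 * n₁ * n₂ < T.card) ↔
      (P₁.lemniscate ∩ P₂.lemniscate).Infinite) ∧
    ((P₁.lemniscate ∩ P₂.lemniscate).Infinite ↔
      ∃ (P : Polynomial ℂ) (m₁ m₂ : ℕ) (c : ℂ), 0 < m₁ ∧ 0 < m₂ ∧ ‖c‖ = 1 ∧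
        P₁ = P ^ m₁ ∧ P₂ = Polynomial.C c * P ^ m₂) := by
  subst hd₁ hd₂
  have card_of_infinite (hinf : (P₁.lemniscate ∩ P₂.lemniscate).Infinite) :
      ∃ T : Finset ℂ, ↑T ⊆ P₁.lemniscate ∩ P₂.lemniscate ∧
        2 * P₁.natDegree * P₂.natDegree < T.card :=
    let ⟨T, hT, hcard⟩ := hinf.exists_subset_card_eq (2 * P₁.natDegree * P₂.natDegree + 1)
    ⟨T, hT, by omega⟩
  refine ⟨⟨fun ⟨_, hT, hcard⟩ => ?_, card_of_infinite⟩,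
    ⟨fun hinf => ?_, lemniscate_inter_infinite_of_exists_eq_C_mul_pow h₁⟩⟩
  · exact lemniscate_inter_infinite_of_exists_eq_C_mul_pow h₁
      (exists_eq_C_mul_pow_of_card_lemniscate_inter_gt h₁ h₂ hT hcard)
  · obtain ⟨_, hT, hcard⟩ := card_of_infinite hinf
    exact exists_eq_C_mul_pow_of_card_lemniscate_inter_gt h₁ h₂ hT hcard
end

section
/- Let P be a complex polynomial of degree n ≥ 1, and let Q = A/B be a non-constant complex rational function with A and B coprime polynomials. Let q₁, q₂, …, q_l be the multiplicities of the poles of Q on the Riemann sphere, i.e., the multiplicities of the roots of B, together with the number deg A − deg B in case deg A > deg B (the multiplicity of the pole at infinity). If gcd(q₁, q₂, …, q_l, n) = 1, then the bivariate polynomial E_{P,Q}(x, y) = P(x)·B(y) − A(y) is irreducible over ℂ. -/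
/-!
Fix a pole of `Q = A / B`: a root `z` of `B`, of multiplicity `q`, or infinity when
`deg A > deg B`, with `q = deg A - deg B`. Its order function on `K[y]` (`ord_z`, resp. `-deg`)
gives the coefficients of `E = P(x) B(y) - A(y) ∈ K[y][x]` the orders `ord(E₀) < ord(Eᵢ) = ord(Eₙ)`
for `0 < i ≤ n` with `Eᵢ ≠ 0`, and `ord(Eₙ) - ord(E₀) = q`: the Newton polygon of `E` is the single
segment of slope `q / n`. Gauss's lemma (multiplicativity of the Gauss norm) forces every factor
`F` of `E` of `x`-degree `m` to have a Newton polygon which is a segment of the same slope with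
integral end points, so `n ∣ q m`. Hence `n / gcd(n, m)` divides every pole multiplicity, so
`n ∣ m` and `m ∈ {0, n}`; and a factor of `x`-degree `0` divides `A` and `B`, so it is a unit.
-/

open Polynomial

theorem Nat.div_gcd_dvd_of_dvd_mul {n m q : ℕ} (hn : 0 < n) (h : n ∣ q * m) :
    n / n.gcd m ∣ q := by
  have hg : 0 < n.gcd m := Nat.gcd_pos_of_pos_left m hn
  refine (Nat.coprime_div_gcd_div_gcd hg).dvd_of_dvd_mul_right ?_
  rw [← Nat.mul_div_assoc q (Nat.gcd_dvd_right n m)]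
  exact Nat.div_dvd_div (Nat.gcd_dvd_left n m) h

/-- An integer-valued valuation on the nonzero elements of `R`; its value at `0` is irrelevant. -/
structure IntOrder (R : Type*) [Ring R] where
  toFun : R → ℤ
  map_mul : ∀ r s, r ≠ 0 → s ≠ 0 → toFun (r * s) = toFun r + toFun s
  min_le_map_add : ∀ r s, r ≠ 0 → s ≠ 0 → r + s ≠ 0 → min (toFun r) (toFun s) ≤ toFun (r + s)

namespace IntOrder

variable {R : Type*} [Ring R]

instance : CoeFun (IntOrder R) (fun _ => R → ℤ) := ⟨toFun⟩

variable (ord : IntOrder R)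

open Classical in
noncomputable def expNeg (r : R) : ℝ := if r = 0 then 0 else Real.exp (-ord r)

theorem expNeg_of_ne_zero {r : R} (hr : r ≠ 0) : ord.expNeg r = Real.exp (-ord r) :=
  if_neg hr

theorem expNeg_nonneg (r : R) : 0 ≤ ord.expNeg r := by
  unfold expNeg; split_ifs <;> positivity

theorem isNonarchimedean_expNeg : IsNonarchimedean ord.expNeg := by
  intro r s
  by_cases hr : r = 0
  · simp only [hr, zero_add, le_max_right]
  by_cases hs : s = 0
  · simp only [hs, add_zero, le_max_left]
  by_cases hrs : r + s = 0
  · rw [hrs, expNeg, if_pos rfl]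
    exact (ord.expNeg_nonneg r).trans (le_max_left _ _)
  simp only [ord.expNeg_of_ne_zero, hr, hs, hrs, ne_eq, not_false_eq_true]
  calc Real.exp (-ord (r + s)) ≤ Real.exp (-(min (ord r) (ord s) : ℤ)) := by
        gcongr; exact_mod_cast ord.min_le_map_add r s hr hs hrs
    _ ≤ _ := by rcases min_cases (ord r) (ord s) with ⟨h, _⟩ | ⟨h, _⟩ <;> simp [h]

variable [NoZeroDivisors R]

noncomputable def toAbsoluteValue : AbsoluteValue R ℝ where
  toFun := ord.expNeg
  map_mul' r s := by
    by_cases hr : r = 0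
    · simp [hr, expNeg]
    by_cases hs : s = 0
    · simp [hs, expNeg]
    simp only [ord.expNeg_of_ne_zero, hr, hs, mul_ne_zero, ne_eq, not_false_eq_true,
      ord.map_mul r s hr hs, Int.cast_add, neg_add, Real.exp_add]
  nonneg' := ord.expNeg_nonneg
  eq_zero' r := by unfold expNeg; split_ifs with hr <;> simp [hr, Real.exp_ne_zero]
  add_le' _ _ := ord.isNonarchimedean_expNeg.add_le ord.expNeg_nonneg

theorem toAbsoluteValue_of_ne_zero {r : R} (hr : r ≠ 0) :
    ord.toAbsoluteValue r = Real.exp (-ord r) :=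
  ord.expNeg_of_ne_zero hr

theorem isNonarchimedean_toAbsoluteValue : IsNonarchimedean ord.toAbsoluteValue :=
  ord.isNonarchimedean_expNeg

end IntOrder

namespace Polynomial

variable {R : Type*} [Ring R]

/-- The Newton polygon of `p` is a single segment. -/
def GaussNormAttainedAtEnds (v : AbsoluteValue R ℝ) (c : ℝ) (p : R[X]) : Prop :=
  p.gaussNorm v c = v (p.coeff 0) ∧ p.gaussNorm v c = v p.leadingCoeff * c ^ p.natDegree

variable {v : AbsoluteValue R ℝ} {c : ℝ}

private theorem eq_of_le_of_le_of_mul_eq {a b A B : ℝ} (ha : a ≤ A) (hb : b ≤ B) (ha0 : 0 ≤ a)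
    (hab : a * b = A * B) (hAB : 0 < A * B) : a = A := by
  have hb0 : 0 < b := pos_of_mul_pos_right (hab ▸ hAB) ha0
  nlinarith

theorem GaussNormAttainedAtEnds.of_mul_left (hna : IsNonarchimedean v) (hc : 0 < c)
    {p q : R[X]} (hpq : p * q ≠ 0) (h : GaussNormAttainedAtEnds v c (p * q)) :
    GaussNormAttainedAtEnds v c p := by
  have hmul : (p * q).gaussNorm v c = p.gaussNorm v c * q.gaussNorm v c := gaussNorm_mul hna hc p q
  have hpos : 0 < p.gaussNorm v c * q.gaussNorm v c := by
    rw [← hmul]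
    refine ((p * q).gaussNorm_nonneg v hc.le).lt_of_ne' ?_
    rwa [Ne, gaussNorm_eq_zero_iff v _ (fun _ => v.eq_zero.mp) hc]
  have hlc : p.leadingCoeff * q.leadingCoeff ≠ 0 := by
    rw [← v.ne_zero_iff, map_mul]
    exact mul_ne_zero (v.ne_zero (leadingCoeff_ne_zero.mpr (left_ne_zero_of_mul hpq)))
      (v.ne_zero (leadingCoeff_ne_zero.mpr (right_ne_zero_of_mul hpq)))
  have hle (f : R[X]) (i : ℕ) := f.le_gaussNorm v hc.le i
  constructor
  · refine (eq_of_le_of_le_of_mul_eq (b := v (q.coeff 0)) ?_ ?_ (v.nonneg _) ?_ hpos).symm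
    · simpa using hle p 0
    · simpa using hle q 0
    · rw [← map_mul, ← mul_coeff_zero, ← hmul, h.1]
  · refine (eq_of_le_of_le_of_mul_eq (b := v q.leadingCoeff * c ^ q.natDegree) (hle p _)
      (hle q _) (by positivity) ?_ hpos).symm
    rw [← hmul, h.2, leadingCoeff_mul' hlc, natDegree_mul' hlc, map_mul, pow_add]
    simp only [leadingCoeff]
    ring

end Polynomial

namespace IntOrder

variable {R : Type*} [Ring R] [NoZeroDivisors R] (ord : IntOrder R)

theorem natDegree_dvd_mul_natDegree_of_dvd {E F : R[X]} (hF : F ∣ E) (h0 : E.coeff 0 ≠ 0)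
    (hends : ord (E.coeff 0) ≤ ord E.leadingCoeff)
    (hmid : ∀ i, 0 < i → E.coeff i ≠ 0 → ord E.leadingCoeff ≤ ord (E.coeff i)) :
    (E.natDegree : ℤ) ∣ (ord E.leadingCoeff - ord (E.coeff 0)) * F.natDegree := by
  have hE : E ≠ 0 := fun h => h0 (by rw [h, coeff_zero])
  set n := E.natDegree
  rcases Nat.eq_zero_or_pos n with hn | hn
  · have : F.natDegree = 0 := Nat.le_zero.mp (hn ▸ natDegree_le_of_dvd hF hE)
    simp [this]
  set α : ℤ := ord (E.coeff 0)
  set β : ℤ := ord E.leadingCoeff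
  -- the weight `c` for which `E₀` and `Eₙ` carry the same weighted absolute value `v (Eᵢ) * c ^ i`
  set c : ℝ := Real.exp ((β - α) / n)
  set v := ord.toAbsoluteValue
  have hv {r : R} (hr : r ≠ 0) (i : ℕ) : v r * c ^ i = Real.exp (-ord r + i * ((β - α) / n)) := by
    rw [ord.toAbsoluteValue_of_ne_zero hr, ← Real.exp_nat_mul, ← Real.exp_add]
  have hnR : (0 : ℝ) < n := by exact_mod_cast hn
  have hlc : E.leadingCoeff ≠ 0 := leadingCoeff_ne_zero.mpr hE
  have htop : v E.leadingCoeff * c ^ n = v (E.coeff 0) := by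
    rw [hv hlc, ← mul_one (v _), ← pow_zero c, hv h0]
    congr 1
    field_simp
    ring
  have hbound (i : ℕ) : v (E.coeff i) * c ^ i ≤ v (E.coeff 0) := by
    rcases eq_or_ne (E.coeff i) 0 with hi | hi
    · rw [hi, map_zero, zero_mul]
      exact v.nonneg _
    rcases Nat.eq_zero_or_pos i with rfl | hipos
    · simp
    rw [← htop, hv hi, hv hlc, Real.exp_le_exp]
    have hin : (i : ℝ) ≤ n := by exact_mod_cast le_natDegree_of_ne_zero hi
    have hβ : (β : ℝ) ≤ ord (E.coeff i) := by exact_mod_cast hmid i hipos hi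
    have hslope : (0 : ℝ) ≤ (β - α) / n := div_nonneg (by simp [sub_nonneg, hends]) hnR.le
    nlinarith
  have hc : 0 < c := Real.exp_pos _
  have hEnds : GaussNormAttainedAtEnds v c E := by
    have hN : E.gaussNorm v c = v (E.coeff 0) := by
      obtain ⟨i, hi⟩ := E.exists_eq_gaussNorm v c
      exact le_antisymm (hi ▸ hbound i) (by simpa using E.le_gaussNorm v hc.le 0)
    exact ⟨hN, hN.trans htop.symm⟩
  obtain ⟨G, rfl⟩ := hF
  obtain ⟨hF0, hFtop⟩ := hEnds.of_mul_left ord.isNonarchimedean_toAbsoluteValue hc hE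
  have hF0ne : F.coeff 0 ≠ 0 := left_ne_zero_of_mul (mul_coeff_zero F G ▸ h0)
  have hlcF : F.leadingCoeff ≠ 0 := leadingCoeff_ne_zero.mpr (left_ne_zero_of_mul hE)
  have hFslope := hF0.symm.trans hFtop
  rw [← mul_one (v _), ← pow_zero c, hv hF0ne, hv hlcF, Real.exp_eq_exp, Nat.cast_zero, zero_mul,
    add_zero] at hFslope
  refine ⟨ord F.leadingCoeff - ord (F.coeff 0), ?_⟩
  have : ((β - α) * F.natDegree : ℝ) = n * (ord F.leadingCoeff - ord (F.coeff 0)) := by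
    field_simp at hFslope
    linear_combination -hFslope
  exact_mod_cast this

variable {K : Type*} [CommRing K] [IsDomain K]

noncomputable def rootMultiplicity (z : K) : IntOrder K[X] where
  toFun p := p.rootMultiplicity z
  map_mul p q hp hq := by
    simp only [Polynomial.rootMultiplicity_mul (mul_ne_zero hp hq), Nat.cast_add]
  min_le_map_add p q _ _ hpq := by exact_mod_cast rootMultiplicity_add z hpq

noncomputable def negNatDegree : IntOrder K[X] where
  toFun p := -(p.natDegree : ℤ)
  map_mul p q hp hq := by simp only [natDegree_mul hp hq]; push_cast; ring
  min_le_map_add p q _ _ _ := by have := natDegree_add_le p q; omega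

end IntOrder

namespace Polynomial

section CommRing

variable {K : Type*} [CommRing K] (P A B : K[X])

/-- `E_{P,Q}(x, y) = P(x) B(y) - A(y)`, with `x` the outer variable. -/
noncomputable def separated : K[X][X] := P.map C * C B - C A

theorem coeff_separated_zero : (separated P A B).coeff 0 = C (P.coeff 0) * B - A := by
  simp [separated, coeff_C]

theorem coeff_separated_of_pos {i : ℕ} (hi : 0 < i) :
    (separated P A B).coeff i = C (P.coeff i) * B := by
  simp [separated, coeff_C, hi.ne']

variable [IsDomain K] {P A B}

theorem natDegree_separated (hP : 0 < P.natDegree) (hB : B ≠ 0) :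
    (separated P A B).natDegree = P.natDegree := by
  have hPB : (P.map C * C B).natDegree = P.natDegree := by
    rw [natDegree_mul_C hB, natDegree_map_eq_of_injective C_injective]
  rw [separated, natDegree_sub_eq_left_of_natDegree_lt (by rwa [hPB, natDegree_C]), hPB]

theorem separated_ne_zero (hP : 0 < P.natDegree) (hB : B ≠ 0) : separated P A B ≠ 0 :=
  ne_zero_of_natDegree_gt (n := 0) (by rwa [natDegree_separated hP hB])

theorem natDegree_dvd_rootMultiplicity_mul_of_dvd_separated (hP : 0 < P.natDegree) (hB : B ≠ 0)
    (hcop : IsCoprime A B) {F : K[X][X]} (hF : F ∣ separated P A B) {z : K}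
    (hz : B.eval z = 0) : P.natDegree ∣ B.rootMultiplicity z * F.natDegree := by
  have hA : A.eval z ≠ 0 := fun hA => by
    obtain ⟨u, w, huw⟩ := hcop
    simpa [hz, hA] using congrArg (eval z) huw
  have h0 : ¬((separated P A B).coeff 0).IsRoot z := by
    simpa [coeff_separated_zero, hz] using hA
  have hcoeff {i : ℕ} (hi : 0 < i) (hne : (separated P A B).coeff i ≠ 0) :
      ((separated P A B).coeff i).rootMultiplicity z = B.rootMultiplicity z := by
    rw [coeff_separated_of_pos P A B hi] at hne ⊢
    rw [rootMultiplicity_mul hne, rootMultiplicity_C, zero_add]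
  have hlc : (separated P A B).leadingCoeff.rootMultiplicity z = B.rootMultiplicity z :=
    hcoeff (natDegree_separated hP hB ▸ hP) (leadingCoeff_ne_zero.mpr (separated_ne_zero hP hB))
  have key := (IntOrder.rootMultiplicity z).natDegree_dvd_mul_natDegree_of_dvd hF
    (fun h => h0 (by simp [h]))
    (by simp [IntOrder.rootMultiplicity, rootMultiplicity_eq_zero h0])
    (fun i hi hne => by simp [IntOrder.rootMultiplicity, hcoeff hi hne, hlc])
  simp only [IntOrder.rootMultiplicity, hlc, rootMultiplicity_eq_zero h0,
    natDegree_separated hP hB, Nat.cast_zero, sub_zero] at key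
  exact_mod_cast key

theorem natDegree_dvd_natDegree_sub_mul_of_dvd_separated (hP : 0 < P.natDegree) (hB : B ≠ 0)
    {F : K[X][X]} (hF : F ∣ separated P A B) (hAB : B.natDegree < A.natDegree) :
    P.natDegree ∣ (A.natDegree - B.natDegree) * F.natDegree := by
  have h0 : ((separated P A B).coeff 0).natDegree = A.natDegree := by
    rw [coeff_separated_zero]
    exact natDegree_sub_eq_right_of_natDegree_lt ((natDegree_C_mul_le _ _).trans_lt hAB)
  have hcoeff {i : ℕ} (hi : 0 < i) (hne : (separated P A B).coeff i ≠ 0) :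
      ((separated P A B).coeff i).natDegree = B.natDegree := by
    rw [coeff_separated_of_pos P A B hi] at hne ⊢
    exact natDegree_C_mul (fun h => hne (by rw [h, C_0, zero_mul]))
  have hlc : (separated P A B).leadingCoeff.natDegree = B.natDegree :=
    hcoeff (natDegree_separated hP hB ▸ hP) (leadingCoeff_ne_zero.mpr (separated_ne_zero hP hB))
  have key := IntOrder.negNatDegree.natDegree_dvd_mul_natDegree_of_dvd hF
    (fun h => by simp [h] at h0; omega)
    (by simp [IntOrder.negNatDegree, h0, hlc, hAB.le])
    (fun i hi hne => by simp [IntOrder.negNatDegree, hcoeff hi hne, hlc])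
  simp only [IntOrder.negNatDegree, hlc, h0, natDegree_separated hP hB, neg_sub_neg,
    ← Nat.cast_sub hAB.le] at key
  exact_mod_cast key

theorem natDegree_eq_zero_or_eq_of_dvd_separated (hP : 0 < P.natDegree) (hB : B ≠ 0)
    (hcop : IsCoprime A B)
    (hgcd : ∀ d : ℕ, d ∣ P.natDegree → (∀ z : K, B.eval z = 0 → d ∣ B.rootMultiplicity z) →
      (B.natDegree < A.natDegree → d ∣ A.natDegree - B.natDegree) → d = 1)
    {F : K[X][X]} (hF : F ∣ separated P A B) :
    F.natDegree = 0 ∨ F.natDegree = P.natDegree := by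
  set n := P.natDegree
  set m := F.natDegree
  have hd : n / n.gcd m = 1 := hgcd _ (Nat.div_dvd_of_dvd (Nat.gcd_dvd_left n m))
    (fun z hz => Nat.div_gcd_dvd_of_dvd_mul hP
      (natDegree_dvd_rootMultiplicity_mul_of_dvd_separated hP hB hcop hF hz))
    (fun hAB => Nat.div_gcd_dvd_of_dvd_mul hP
      (natDegree_dvd_natDegree_sub_mul_of_dvd_separated hP hB hF hAB))
  have hnm : n ∣ m := by
    have hg := Nat.div_mul_cancel (Nat.gcd_dvd_left n m)
    rw [hd, one_mul] at hg
    exact hg ▸ Nat.gcd_dvd_right n m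
  have hmn : m ≤ n := by
    simpa only [natDegree_separated hP hB] using natDegree_le_of_dvd hF (separated_ne_zero hP hB)
  rcases Nat.eq_zero_or_pos m with hm | hm
  · exact Or.inl hm
  · exact Or.inr (le_antisymm hmn (Nat.le_of_dvd hm hnm))

end CommRing

variable {K : Type*} [Field K] {P A B : K[X]}

theorem isUnit_of_dvd_separated_of_natDegree_eq_zero (hP : 0 < P.natDegree)
    (hcop : IsCoprime A B) {F : K[X][X]} (hF : F ∣ separated P A B) (hF0 : F.natDegree = 0) :
    IsUnit F := by
  obtain ⟨c, rfl⟩ := natDegree_eq_zero.mp hF0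
  rw [C_dvd_iff_dvd_coeff] at hF
  have hcB : c ∣ B := by
    have hlc : IsUnit (C P.leadingCoeff) :=
      isUnit_C.mpr (leadingCoeff_ne_zero.mpr (ne_zero_of_natDegree_gt hP)).isUnit
    simpa [coeff_separated_of_pos P A B hP, hlc.dvd_mul_left] using hF P.natDegree
  have hcA : c ∣ A := by
    have h0 := hF 0
    rw [coeff_separated_zero] at h0
    simpa only [sub_sub_cancel] using dvd_sub (hcB.mul_left (C (P.coeff 0))) h0
  exact isUnit_C.mpr (hcop.isUnit_of_dvd' hcA hcB)

theorem irreducible_separated (hP : 0 < P.natDegree) (hB : B ≠ 0) (hcop : IsCoprime A B)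
    (hgcd : ∀ d : ℕ, d ∣ P.natDegree → (∀ z : K, B.eval z = 0 → d ∣ B.rootMultiplicity z) →
      (B.natDegree < A.natDegree → d ∣ A.natDegree - B.natDegree) → d = 1) :
    Irreducible (separated P A B) := by
  refine irreducible_iff.mpr ⟨fun hu => ?_, fun F G hFG => ?_⟩
  · have := natDegree_eq_zero_of_isUnit hu
    rw [natDegree_separated hP hB] at this
    omega
  have hFG0 : F * G ≠ 0 := hFG ▸ separated_ne_zero hP hB
  have hdeg := natDegree_mul (left_ne_zero_of_mul hFG0) (right_ne_zero_of_mul hFG0)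
  rw [← hFG, natDegree_separated hP hB] at hdeg
  rcases natDegree_eq_zero_or_eq_of_dvd_separated hP hB hcop hgcd (Dvd.intro G hFG.symm)
    with hF | hF
  · exact Or.inl (isUnit_of_dvd_separated_of_natDegree_eq_zero hP hcop (Dvd.intro G hFG.symm) hF)
  · exact Or.inr (isUnit_of_dvd_separated_of_natDegree_eq_zero hP hcop
      (Dvd.intro_left F hFG.symm) (by omega))

end Polynomial

namespace MvPolynomial

variable {R : Type*} [CommRing R]

noncomputable def finTwoAlgEquiv : MvPolynomial (Fin 2) R ≃ₐ[R] R[X][X] :=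
  (finSuccEquiv R 1).trans (Polynomial.mapAlgEquiv (uniqueAlgEquiv R (Fin 1)))

theorem finTwoAlgEquiv_X_zero : finTwoAlgEquiv (X 0 : MvPolynomial (Fin 2) R) = Polynomial.X := by
  rw [finTwoAlgEquiv, AlgEquiv.trans_apply, finSuccEquiv_X_zero]
  simp

theorem finTwoAlgEquiv_X_one :
    finTwoAlgEquiv (X 1 : MvPolynomial (Fin 2) R) = Polynomial.C Polynomial.X := by
  rw [finTwoAlgEquiv, AlgEquiv.trans_apply, ← Fin.succ_zero_eq_one, finSuccEquiv_X_succ]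
  simp

theorem finTwoAlgEquiv_separated (P A B : R[X]) :
    finTwoAlgEquiv (Polynomial.aeval (X 0 : MvPolynomial (Fin 2) R) P *
      Polynomial.aeval (X 1) B - Polynomial.aeval (X 1) A) = Polynomial.separated P A B := by
  have aeval_C_X (p : R[X]) :
      Polynomial.aeval (Polynomial.C Polynomial.X : R[X][X]) p = Polynomial.C p := by
    simpa using Polynomial.aeval_algHom_apply (Polynomial.CAlgHom (A := R[X])) Polynomial.X p
  rw [map_sub, map_mul, ← Polynomial.aeval_algHom_apply, ← Polynomial.aeval_algHom_apply,
    ← Polynomial.aeval_algHom_apply, finTwoAlgEquiv_X_zero, finTwoAlgEquiv_X_one,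
    Polynomial.separated, ← Polynomial.aeval_map_algebraMap R[X], Polynomial.aeval_X_left_apply,
    Polynomial.algebraMap_eq, aeval_C_X, aeval_C_X]

end MvPolynomial

theorem separated_variables_irreducible_general
    (P A B : Polynomial ℂ) (n : ℕ) (hn : 1 ≤ n) (hdegP : P.natDegree = n)
    (hB : B ≠ 0) (hcop : IsCoprime A B)
    (hgcd : ∀ d : ℕ, d ∣ n →
      (∀ z : ℂ, B.eval z = 0 → d ∣ B.rootMultiplicity z) →
      (B.natDegree < A.natDegree → d ∣ (A.natDegree - B.natDegree)) →
      d = 1) :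
    Irreducible
      (Polynomial.aeval (MvPolynomial.X 0 : MvPolynomial (Fin 2) ℂ) P *
        Polynomial.aeval (MvPolynomial.X 1 : MvPolynomial (Fin 2) ℂ) B -
        Polynomial.aeval (MvPolynomial.X 1 : MvPolynomial (Fin 2) ℂ) A) := by
  subst hdegP
  rw [← MulEquiv.irreducible_iff MvPolynomial.finTwoAlgEquiv,
    MvPolynomial.finTwoAlgEquiv_separated]
  exact Polynomial.irreducible_separated hn hB hcop hgcd

/-- Theorem (irreducibility of separated variable curves, polynomial case):
if `P` is a polynomial of degree `n ≥ 1` and `Q = A/B` is a non-constant rational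
function (with `A`, `B` coprime) whose pole multiplicities `q₁, …, q_l`
(the root multiplicities of `B`, together with `deg A − deg B` when `deg A > deg B`)
satisfy `gcd(q₁, …, q_l, n) = 1`, then `E_{P,Q}(x, y) = P(x)·B(y) − A(y)` is
irreducible over `ℂ`. The gcd condition is expressed as: every natural number
dividing `n` and all the pole multiplicities equals `1`. -/
theorem separated_variables_irreducible
    (P A B : Polynomial ℂ) (n : ℕ) (hn : 1 ≤ n) (hdegP : P.natDegree = n)
    (hB : B ≠ 0) (hcop : IsCoprime A B)
    (hQnc : ¬ ∃ c : ℂ, A = Polynomial.C c * B)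
    (hgcd : ∀ d : ℕ, d ∣ n →
      (∀ z : ℂ, B.eval z = 0 → d ∣ B.rootMultiplicity z) →
      (B.natDegree < A.natDegree → d ∣ (A.natDegree - B.natDegree)) →
      d = 1) :
    Irreducible
      (Polynomial.aeval (MvPolynomial.X 0 : MvPolynomial (Fin 2) ℂ) P *
        Polynomial.aeval (MvPolynomial.X 1 : MvPolynomial (Fin 2) ℂ) B -
        Polynomial.aeval (MvPolynomial.X 1 : MvPolynomial (Fin 2) ℂ) A) :=
  separated_variables_irreducible_general P A B n hn hdegP hB hcop hgcd
end

section
/- Let S be a non-constant complex rational function, and let T(z) = (z − i)/(z + i). Then the bivariate polynomial 𝔈_{T∘S}(x, y) is irreducible over ℂ if and only if the bivariate polynomial E_{S, S̄}(x, y) is irreducible over ℂ, where S̄ denotes the rational function obtained from S by conjugating all coefficients. -/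
open Polynomial

/-- The lemniscate of a rational function `P`: the set of `z ∈ ℂ` at which `P` has
no pole and `|P(z)| = 1`. -/
noncomputable def RatFunc.lemniscate (P : RatFunc ℂ) : Set ℂ :=
  {z : ℂ | P.denom.eval z ≠ 0 ∧ ‖P.eval (RingHom.id ℂ) z‖ = 1}

/-- The degree of a rational function `P = p/q` (with `p`, `q` coprime):
`max (deg p) (deg q)`. -/
noncomputable def RatFunc.deg (P : RatFunc ℂ) : ℕ :=
  max P.num.natDegree P.denom.natDegree

/-- A rational function is non-constant. -/
def RatFunc.IsNonConst (P : RatFunc ℂ) : Prop := ¬ ∃ c : ℂ, P = RatFunc.C c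

/-- Composition of rational functions: `B ∘ W`. -/
noncomputable def RatFunc.comp (B W : RatFunc ℂ) : RatFunc ℂ :=
  RatFunc.eval (algebraMap ℂ (RatFunc ℂ)) W B

/-- A quotient of finite Blaschke products: a non-constant rational function `B`
with no poles on the unit circle and `|B(z)| = 1` for all `|z| = 1`. -/
def RatFunc.IsBlaschkeQuotient (B : RatFunc ℂ) : Prop :=
  B.IsNonConst ∧ ∀ z : ℂ, ‖z‖ = 1 →
    B.denom.eval z ≠ 0 ∧ ‖B.eval (RingHom.id ℂ) z‖ = 1

/-- `𝔈_P(x, y) = p₁(x)·p̄₁(y) − p₂(x)·p̄₂(y)` where `P = p₁/p₂` in lowest terms: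
the numerator of `P(x) − 1/P̄(y)`. -/
noncomputable def RatFunc.EE (P : RatFunc ℂ) : MvPolynomial (Fin 2) ℂ :=
  Polynomial.aeval (MvPolynomial.X 0 : MvPolynomial (Fin 2) ℂ) P.num *
    Polynomial.aeval (MvPolynomial.X 1 : MvPolynomial (Fin 2) ℂ)
      (P.num.map (starRingEnd ℂ)) -
  Polynomial.aeval (MvPolynomial.X 0 : MvPolynomial (Fin 2) ℂ) P.denom *
    Polynomial.aeval (MvPolynomial.X 1 : MvPolynomial (Fin 2) ℂ)
      (P.denom.map (starRingEnd ℂ))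

/-- `L_P(x, y) = 𝔈_P(x + iy, x − iy)`: the numerator of `P(x+iy)·P̄(x−iy) − 1`. -/
noncomputable def RatFunc.LL (P : RatFunc ℂ) : MvPolynomial (Fin 2) ℂ :=
  MvPolynomial.bind₁
    ![(MvPolynomial.X 0 : MvPolynomial (Fin 2) ℂ) + MvPolynomial.C Complex.I * MvPolynomial.X 1,
      (MvPolynomial.X 0 : MvPolynomial (Fin 2) ℂ) - MvPolynomial.C Complex.I * MvPolynomial.X 1]
    P.EE

/-- `E_{S,S̄}(x, y) = s₁(x)·s̄₂(y) − s̄₁(y)·s₂(x)` where `S = s₁/s₂` in lowest terms: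
the numerator of `S(x) − S̄(y)`, with `S̄` the coefficient-wise conjugate of `S`. -/
noncomputable def RatFunc.ESconj (S : RatFunc ℂ) : MvPolynomial (Fin 2) ℂ :=
  Polynomial.aeval (MvPolynomial.X 0 : MvPolynomial (Fin 2) ℂ) S.num *
    Polynomial.aeval (MvPolynomial.X 1 : MvPolynomial (Fin 2) ℂ)
      (S.denom.map (starRingEnd ℂ)) -
  Polynomial.aeval (MvPolynomial.X 1 : MvPolynomial (Fin 2) ℂ)
      (S.num.map (starRingEnd ℂ)) *
    Polynomial.aeval (MvPolynomial.X 0 : MvPolynomial (Fin 2) ℂ) S.denom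

/-- The Cayley transform `T(z) = (z − i)/(z + i)` as a rational function. -/
noncomputable def cayleyT : RatFunc ℂ :=
  (RatFunc.X - RatFunc.C Complex.I) / (RatFunc.X + RatFunc.C Complex.I)

/-!
Write `S = s₁/s₂` in lowest terms. Then `T ∘ S = (s₁ - i s₂)/(s₁ + i s₂)`, and this is again in
lowest terms because any common factor of `s₁ ∓ i s₂` divides both `s₁` and `s₂`, except that
making the denominator monic divides both by the leading coefficient `a` of `s₁ + i s₂`. Expanding,
`(s₁ - i s₂)(x)(s̄₁ + i s̄₂)(y) - (s₁ + i s₂)(x)(s̄₁ - i s̄₂)(y) = 2i (s₁(x) s̄₂(y) - s₂(x) s̄₁(y))`,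
so `𝔈_{T∘S} = 2i |a|⁻² E_{S,S̄}`: the two polynomials are associated.
-/

theorem IsCoprime.gcd_eq_one {α : Type*} [CommRing α] [NormalizedGCDMonoid α] {a b : α}
    (h : IsCoprime a b) : gcd a b = 1 := by
  rw [← normalize_gcd, normalize_eq_one]
  exact gcd_isUnit_iff_isRelPrime.2 h.isRelPrime

theorem IsCoprime.sub_C_mul_sub_C_mul {K : Type*} [Field K] {p q : K[X]} (h : IsCoprime p q)
    {c d : K} (hcd : c ≠ d) : IsCoprime (p - C c * q) (p - C d * q) := by
  have hcq : IsCoprime (p - C c * q) q := by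
    rw [show p - C c * q = p + q * -C c by ring]
    exact h.add_mul_left_left _
  have hunit : IsUnit (C (c - d)) := isUnit_C.2 (sub_ne_zero.2 hcd).isUnit
  rw [show p - C d * q = C (c - d) * q + (p - C c * q) * 1 by rw [C_sub]; ring]
  exact ((isCoprime_mul_unit_left_right hunit _ _).2 hcq).add_mul_left_right 1

namespace RatFunc

variable {K : Type*} [Field K]

theorem num_div_of_isCoprime {p q : K[X]} (hpq : IsCoprime p q) :
    num (algebraMap _ _ p / algebraMap _ _ q) = Polynomial.C q.leadingCoeff⁻¹ * p := by
  classical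
  rw [num_div, hpq.gcd_eq_one, EuclideanDomain.div_one, EuclideanDomain.div_one]

theorem denom_div_of_isCoprime {p q : K[X]} (hq : q ≠ 0) (hpq : IsCoprime p q) :
    denom (algebraMap _ _ p / algebraMap _ _ q) = Polynomial.C q.leadingCoeff⁻¹ * q := by
  classical
  rw [denom_div _ hq, hpq.gcd_eq_one, EuclideanDomain.div_one]

theorem num_sub_C_mul_denom_ne_zero {S : K⟮X⟯} {c : K} (h : S ≠ C c) :
    S.num - Polynomial.C c * S.denom ≠ 0 := by
  intro h0
  apply h
  rw [← S.num_div_denom, sub_eq_zero.1 h0, map_mul, mul_div_cancel_right₀ _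
    (algebraMap_ne_zero S.denom_ne_zero), algebraMap_C]

theorem div_sub_C_eq (S : K⟮X⟯) (c d : K) :
    (S - C c) / (S - C d) = algebraMap _ _ (S.num - Polynomial.C c * S.denom) /
      algebraMap _ _ (S.num - Polynomial.C d * S.denom) := by
  have hdenom : algebraMap K[X] K⟮X⟯ S.denom ≠ 0 := algebraMap_ne_zero S.denom_ne_zero
  conv_lhs => rw [← S.num_div_denom]
  rw [map_sub, map_sub, map_mul, map_mul, algebraMap_C, algebraMap_C]
  field_simp

theorem num_div_sub_C {S : K⟮X⟯} {c d : K} (hcd : c ≠ d) :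
    num ((S - C c) / (S - C d)) =
      Polynomial.C (S.num - Polynomial.C d * S.denom).leadingCoeff⁻¹ *
        (S.num - Polynomial.C c * S.denom) := by
  rw [div_sub_C_eq, num_div_of_isCoprime (S.isCoprime_num_denom.sub_C_mul_sub_C_mul hcd)]

theorem denom_div_sub_C {S : K⟮X⟯} {c d : K} (hcd : c ≠ d) (hd : S ≠ C d) :
    denom ((S - C c) / (S - C d)) =
      Polynomial.C (S.num - Polynomial.C d * S.denom).leadingCoeff⁻¹ *
        (S.num - Polynomial.C d * S.denom) := by
  rw [div_sub_C_eq, denom_div_of_isCoprime (num_sub_C_mul_denom_ne_zero hd)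
    (S.isCoprime_num_denom.sub_C_mul_sub_C_mul hcd)]

end RatFunc

open Complex

theorem cayleyT_eq :
    cayleyT = algebraMap ℂ[X] (RatFunc ℂ) (X - C I) / algebraMap _ _ (X - C (-I)) := by
  simp [cayleyT, RatFunc.algebraMap_C, RatFunc.algebraMap_X]

theorem isCoprime_cayleyT_num_denom : IsCoprime (X - C I) (X - C (-I)) :=
  isCoprime_X_sub_C_of_isUnit_sub (by simp [I_ne_zero])

theorem cayleyT_num : cayleyT.num = X - C I := by
  rw [cayleyT_eq, RatFunc.num_div_of_isCoprime isCoprime_cayleyT_num_denom]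
  simp

theorem cayleyT_denom : cayleyT.denom = X - C (-I) := by
  rw [cayleyT_eq, RatFunc.denom_div_of_isCoprime (X_sub_C_ne_zero _) isCoprime_cayleyT_num_denom]
  simp

theorem cayleyT_comp (S : RatFunc ℂ) :
    cayleyT.comp S = (S - RatFunc.C I) / (S - RatFunc.C (-I)) := by
  simp [RatFunc.comp, RatFunc.eval, cayleyT_num, cayleyT_denom]

theorem associated_ESconj_EE_cayleyT_comp {S : RatFunc ℂ} (hS : S.IsNonConst) :
    Associated S.ESconj (cayleyT.comp S).EE := by
  have hI : I ≠ -I := by rw [Ne, self_eq_neg]; exact I_ne_zero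
  have hS' : S ≠ RatFunc.C (-I) := fun h => hS ⟨-I, h⟩
  set a := (S.num - C (-I) * S.denom).leadingCoeff with ha
  have ha0 : a ≠ 0 := leadingCoeff_ne_zero.2 (RatFunc.num_sub_C_mul_denom_ne_zero hS')
  have hEE : (cayleyT.comp S).EE =
      MvPolynomial.C (2 * I * (a * starRingEnd ℂ a)⁻¹) * S.ESconj := by
    rw [RatFunc.EE, RatFunc.ESconj, cayleyT_comp, RatFunc.num_div_sub_C hI,
      RatFunc.denom_div_sub_C hI hS', ← ha]
    simp only [Polynomial.map_mul, Polynomial.map_sub, Polynomial.map_C, map_mul, map_sub,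
      Polynomial.aeval_C, MvPolynomial.algebraMap_eq, map_inv₀, map_neg, Polynomial.map_neg,
      conj_I, map_ofNat, mul_inv]
    ring
  rw [hEE]
  have hc : 2 * I * (a * starRingEnd ℂ a)⁻¹ ≠ 0 := by simp [ha0, I_ne_zero]
  exact (associated_unit_mul_left _ _ ((isUnit_iff_ne_zero.2 hc).map MvPolynomial.C)).symm

theorem EE_comp_cayley_irreducible_iff (S : RatFunc ℂ) (hS : S.IsNonConst) :
    Irreducible (cayleyT.comp S).EE ↔ Irreducible S.ESconj :=
  (associated_ESconj_EE_cayleyT_comp hS).symm.irreducible_iff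
end

section
/- Let n ≥ 3 be an integer and P(x) = ∏_{k=1}^{n} (x − k)² ∈ ℝ[x]. Then the set of real solutions (x, y, z) ∈ ℝ³ of the system P(x) + P(y) = 0, z = 0 is finite, has exactly n² elements, and n² is strictly greater than the product 2n·1·1 of the degrees of the three polynomials F₁ = P(x) + P(y), F₂ = z, F₃ = z. In particular, the three-dimensional analog of the real Bézout bound fails. -/
private lemma eval_aeval_X (i : Fin 3) (p : Polynomial ℝ) (v : Fin 3 → ℝ) :
    MvPolynomial.eval v (Polynomial.aeval (MvPolynomial.X i : MvPolynomial (Fin 3) ℝ) p)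
    = p.eval (v i) := by
  rw [Polynomial.aeval_def, Polynomial.eval₂_eq_sum, Polynomial.sum_def]
  simp [Polynomial.eval_eq_sum, Polynomial.sum_def]

private lemma totalDegree_aeval_X_le (i : Fin 3) (p : Polynomial ℝ) :
    (Polynomial.aeval (MvPolynomial.X i : MvPolynomial (Fin 3) ℝ) p).totalDegree ≤ p.natDegree := by
  rw [Polynomial.aeval_def, Polynomial.eval₂_eq_sum, Polynomial.sum_def]
  refine (MvPolynomial.totalDegree_finset_sum _ _).trans ?_
  refine Finset.sup_le fun k hk => ?_
  refine (MvPolynomial.totalDegree_mul _ _).trans ?_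
  simp only [MvPolynomial.algebraMap_eq, MvPolynomial.totalDegree_C, zero_add]
  exact (MvPolynomial.totalDegree_X_pow _ _).le.trans (Polynomial.le_natDegree_of_mem_supp _ hk)

private lemma coeff_aeval_X_ne (i j : Fin 3) (p : Polynomial ℝ) (d : ℕ) (hij : i ≠ j)
    (hd : d ≠ 0) :
    (Polynomial.aeval (MvPolynomial.X i : MvPolynomial (Fin 3) ℝ) p).coeff (Finsupp.single j d)
    = 0 := by
  rw [Polynomial.aeval_def, Polynomial.eval₂_eq_sum, Polynomial.sum_def, MvPolynomial.coeff_sum]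
  refine Finset.sum_eq_zero fun k hk => ?_
  rw [MvPolynomial.algebraMap_eq, MvPolynomial.coeff_C_mul, MvPolynomial.coeff_single_X_pow]
  simp [hij, hd]

private lemma coeff_aeval_X_self (i : Fin 3) (p : Polynomial ℝ) (d : ℕ) (hd : d ≠ 0) :
    (Polynomial.aeval (MvPolynomial.X i : MvPolynomial (Fin 3) ℝ) p).coeff (Finsupp.single i d)
    = p.coeff d := by
  rw [Polynomial.aeval_def, Polynomial.eval₂_eq_sum, Polynomial.sum_def, MvPolynomial.coeff_sum]
  rw [Finset.sum_eq_single d]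
  · simp [MvPolynomial.algebraMap_eq, MvPolynomial.coeff_C_mul, MvPolynomial.coeff_single_X_pow]
  · intro k hk hkd
    rw [MvPolynomial.algebraMap_eq, MvPolynomial.coeff_C_mul, MvPolynomial.coeff_single_X_pow]
    simp [hkd, hd]
  · intro h
    simp [Polynomial.notMem_support_iff.mp h]

theorem no_three_dimensional_real_bezout (n : ℕ) (hn : 3 ≤ n)
    (P : Polynomial ℝ)
    (hP : P = ∏ k ∈ Finset.Icc 1 n, (Polynomial.X - Polynomial.C (k : ℝ)) ^ 2)
    (F₁ F₂ F₃ : MvPolynomial (Fin 3) ℝ)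
    (hF₁ : F₁ = Polynomial.aeval (MvPolynomial.X 0 : MvPolynomial (Fin 3) ℝ) P +
      Polynomial.aeval (MvPolynomial.X 1 : MvPolynomial (Fin 3) ℝ) P)
    (hF₂ : F₂ = MvPolynomial.X 2) (hF₃ : F₃ = MvPolynomial.X 2) :
    {v : Fin 3 → ℝ | MvPolynomial.eval v F₁ = 0 ∧ MvPolynomial.eval v F₂ = 0 ∧
      MvPolynomial.eval v F₃ = 0}.Finite ∧
    {v : Fin 3 → ℝ | MvPolynomial.eval v F₁ = 0 ∧ MvPolynomial.eval v F₂ = 0 ∧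
      MvPolynomial.eval v F₃ = 0}.ncard = n ^ 2 ∧
    F₁.totalDegree = 2 * n ∧ F₂.totalDegree = 1 ∧ F₃.totalDegree = 1 ∧
    F₁.totalDegree * F₂.totalDegree * F₃.totalDegree < n ^ 2 := by
  have hPdeg : P.natDegree = 2 * n := by
    rw [hP, Polynomial.natDegree_prod]
    · simp only [Polynomial.natDegree_pow, Polynomial.natDegree_X_sub_C]
      simp [mul_comm]
    · intro k _; exact pow_ne_zero _ (Polynomial.X_sub_C_ne_zero _)
  have hPmonic : P.Monic := by
    rw [hP]; exact Polynomial.monic_prod_of_monic _ _ fun k _ => (Polynomial.monic_X_sub_C _).pow 2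
  have hPnn : ∀ x : ℝ, 0 ≤ P.eval x := by
    intro x
    rw [hP, Polynomial.eval_prod]
    exact Finset.prod_nonneg fun k _ => by simp [sq_nonneg]
  have hPzero : ∀ x : ℝ, P.eval x = 0 ↔ ∃ k ∈ Finset.Icc 1 n, x = (k : ℝ) := by
    intro x
    rw [hP, Polynomial.eval_prod, Finset.prod_eq_zero_iff]
    simp [sub_eq_zero, pow_eq_zero_iff]
  -- description of the solution set
  set f : ℕ × ℕ → (Fin 3 → ℝ) := fun p => ![(p.1 : ℝ), (p.2 : ℝ), 0] with hf
  have hSet : {v : Fin 3 → ℝ | MvPolynomial.eval v F₁ = 0 ∧ MvPolynomial.eval v F₂ = 0 ∧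
      MvPolynomial.eval v F₃ = 0}
      = ↑((Finset.Icc 1 n ×ˢ Finset.Icc 1 n).image f) := by
    ext v
    simp only [Set.mem_setOf_eq, hF₁, hF₂, hF₃, map_add, eval_aeval_X,
      MvPolynomial.eval_X, Finset.coe_image, Set.mem_image, Finset.mem_coe,
      Finset.mem_product]
    constructor
    · rintro ⟨h1, h2, -⟩
      have h0 : P.eval (v 0) = 0 ∧ P.eval (v 1) = 0 := by
        constructor <;> nlinarith [hPnn (v 0), hPnn (v 1)]
      obtain ⟨a, ha, hva⟩ := (hPzero _).mp h0.1
      obtain ⟨b, hb, hvb⟩ := (hPzero _).mp h0.2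
      refine ⟨(a, b), ⟨ha, hb⟩, ?_⟩
      funext j
      fin_cases j <;> simp [hf, hva, hvb, h2]
    · rintro ⟨⟨a, b⟩, ⟨ha, hb⟩, rfl⟩
      have e0 : f (a, b) 0 = (a : ℝ) := by simp [hf]
      have e1 : f (a, b) 1 = (b : ℝ) := by simp [hf]
      have e2 : f (a, b) 2 = 0 := by simp [hf]
      rw [e0, e1, e2]
      rw [(hPzero _).mpr ⟨a, ha, rfl⟩, (hPzero _).mpr ⟨b, hb, rfl⟩]
      simp
  have hfin : {v : Fin 3 → ℝ | MvPolynomial.eval v F₁ = 0 ∧ MvPolynomial.eval v F₂ = 0 ∧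
      MvPolynomial.eval v F₃ = 0}.Finite := by
    rw [hSet]; exact Finset.finite_toSet _
  have hinj : Set.InjOn f ↑(Finset.Icc 1 n ×ˢ Finset.Icc 1 n) := by
    intro p _ q _ h
    have h0 := congrFun h 0
    have h1 := congrFun h 1
    simp only [hf, Matrix.cons_val_zero, Matrix.cons_val_one, Matrix.head_cons,
      Nat.cast_inj] at h0 h1
    exact Prod.ext h0 h1
  have hcard : {v : Fin 3 → ℝ | MvPolynomial.eval v F₁ = 0 ∧ MvPolynomial.eval v F₂ = 0 ∧
      MvPolynomial.eval v F₃ = 0}.ncard = n ^ 2 := by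
    rw [hSet, Set.ncard_coe_finset, Finset.card_image_of_injOn hinj, Finset.card_product,
      Nat.card_Icc]
    simp [sq]
  -- degree of F₁
  have h2n : 2 * n ≠ 0 := by omega
  have hd1 : F₁.totalDegree = 2 * n := by
    apply le_antisymm
    · rw [hF₁]
      refine (MvPolynomial.totalDegree_add _ _).trans ?_
      simp only [sup_le_iff]
      exact ⟨hPdeg ▸ totalDegree_aeval_X_le 0 P, hPdeg ▸ totalDegree_aeval_X_le 1 P⟩
    · have hc : F₁.coeff (Finsupp.single (0 : Fin 3) (2 * n)) = 1 := by
        rw [hF₁, MvPolynomial.coeff_add, coeff_aeval_X_self 0 P _ h2n,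
          coeff_aeval_X_ne 1 0 P _ (by decide) h2n, add_zero, ← hPdeg]
        exact hPmonic.coeff_natDegree
      have hmem : Finsupp.single (0 : Fin 3) (2 * n) ∈ F₁.support :=
        MvPolynomial.mem_support_iff.mpr (by rw [hc]; norm_num)
      have := MvPolynomial.le_totalDegree hmem
      rwa [Finsupp.sum_single_index rfl] at this
  refine ⟨hfin, hcard, hd1, ?_, ?_, ?_⟩
  · rw [hF₂]; exact MvPolynomial.totalDegree_X _
  · rw [hF₃]; exact MvPolynomial.totalDegree_X _
  · rw [hd1, hF₂, hF₃, MvPolynomial.totalDegree_X]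
    nlinarith
end
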